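/- arXiv:1406.7413 — 6 statements merged into one kernel-verified Lean document; each statement's English description precedes it below -/
import Mathlib

section
/- Let CC be a C-system with operation s, let g : Z → Y and f : Y → X be morphisms with l(X) > 0. Then s_{g∘f} = g*(s_f, 1), the pull-back of the section s_f : Y → (ft(f))*X along g. -/
universe u v

/-- A pre-category: sets of objects and morphisms with source, target, identity
and an (everywhere-defined but only meaningful on composable pairs) composition,
written in diagrammatic order: `comp f g` is `f ∘ g` for `f : X → Y`, `g : Y → Z`. -/
structure PreCat (Ob : Type u) (Mor : Type v) where
  dom : Mor → Ob
  cod : Mor → Ob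
  id : Ob → Mor
  comp : Mor → Mor → Mor
  id_dom : ∀ X, dom (id X) = X
  id_cod : ∀ X, cod (id X) = X
  dom_comp : ∀ f g, cod f = dom g → dom (comp f g) = dom f
  cod_comp : ∀ f g, cod f = dom g → cod (comp f g) = cod g
  id_comp : ∀ f, comp (id (dom f)) f = f
  comp_id : ∀ f, comp f (id (cod f)) = f
  comp_assoc : ∀ f g h, cod f = dom g → cod g = dom h →
    comp (comp f g) h = comp f (comp g h)

/-- A C0-system (Definition 2014.07.06.def3). -/
structure C0 (Ob : Type u) (Mor : Type v) extends PreCat Ob Mor where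
  l : Ob → ℕ
  pt : Ob
  ft : Ob → Ob
  p : Ob → Mor
  p_dom : ∀ X, dom (p X) = X
  p_cod : ∀ X, cod (p X) = ft X
  /-- `star X f` is `f*X`, meaningful for `0 < l X` and `cod f = ft X`. -/
  star : Ob → Mor → Ob
  /-- `q X f` is `q(f,X) : f*X → X`, meaningful for `0 < l X` and `cod f = ft X`. -/
  q : Ob → Mor → Mor
  l_pt : l pt = 0
  eq_pt : ∀ X, l X = 0 → X = pt
  l_ft : ∀ X, 0 < l X → l (ft X) = l X - 1
  ft_pt : ft pt = pt
  pt_final : ∀ Y, ∃! f, dom f = Y ∧ cod f = pt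
  l_star : ∀ X f, 0 < l X → cod f = ft X → 0 < l (star X f)
  ft_star : ∀ X f, 0 < l X → cod f = ft X → ft (star X f) = dom f
  q_dom : ∀ X f, 0 < l X → cod f = ft X → dom (q X f) = star X f
  q_cod : ∀ X f, 0 < l X → cod f = ft X → cod (q X f) = X
  square_comm : ∀ X f, 0 < l X → cod f = ft X →
    comp (p (star X f)) f = comp (q X f) (p X)
  star_id : ∀ X, 0 < l X → star X (id (ft X)) = X
  q_id : ∀ X, 0 < l X → q X (id (ft X)) = id X
  star_comp : ∀ X f g, 0 < l X → cod f = ft X → cod g = dom f →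
    star X (comp g f) = star (star X f) g
  q_comp : ∀ X f g, 0 < l X → cod f = ft X → cod g = dom f →
    q X (comp g f) = comp (q (star X f) g) (q X f)

/-- `ft(f) = f ∘ p_X` for `f : Y → X`. -/
def C0.ftMor {Ob : Type u} {Mor : Type v} (C : C0 Ob Mor) (f : Mor) : Mor :=
  C.comp f (C.p (C.cod f))

/-- The axioms of the operation `f ↦ s_f` of a C-system (Definition 2014.07.06.def1),
for `f : Y → X` with `0 < l X`. -/
def C0.IsSOp {Ob : Type u} {Mor : Type v} (C : C0 Ob Mor) (s : Mor → Mor) : Prop :=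
  (∀ f, 0 < C.l (C.cod f) → C.dom (s f) = C.dom f) ∧
  (∀ f, 0 < C.l (C.cod f) → C.cod (s f) = C.star (C.cod f) (C.ftMor f)) ∧
  (∀ f, 0 < C.l (C.cod f) →
    C.comp (s f) (C.p (C.star (C.cod f) (C.ftMor f))) = C.id (C.dom f)) ∧
  (∀ f, 0 < C.l (C.cod f) → C.comp (s f) (C.q (C.cod f) (C.ftMor f)) = f) ∧
  (∀ f U g, 0 < C.l U → C.cod g = C.ft U → 0 < C.l (C.cod f) → C.cod f = C.star U g →
    s f = s (C.comp f (C.q U g)))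

/-- A C-system: a C0-system together with an operation `f ↦ s_f` satisfying the axioms. -/
structure CSys (Ob : Type u) (Mor : Type v) extends C0 Ob Mor where
  sOp : Mor → Mor
  sOp_spec : C0.IsSOp toC0 sOp

def CSys.ftMor {Ob : Type u} {Mor : Type v} (C : CSys Ob Mor) (f : Mor) : Mor :=
  C.comp f (C.p (C.cod f))

/-- `Õb(CC)`: the set of sections `s : ft X → X` of the canonical projections `p_X`,
for `l X > 0`. -/
def CSys.tOb {Ob : Type u} {Mor : Type v} (C : CSys Ob Mor) : Set Mor :=
  {s | 0 < C.l (C.cod s) ∧ C.dom s = C.ft (C.cod s) ∧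
    C.comp s (C.p (C.cod s)) = C.id (C.ft (C.cod s))}

/-- Iterated canonical projection `p_{X,i} : X → ft^i X` (meaningful for `i ≤ l X`). -/
def CSys.pIter {Ob : Type u} {Mor : Type v} (C : CSys Ob Mor) (X : Ob) : ℕ → Mor
  | 0 => C.id X
  | i + 1 => C.comp (CSys.pIter C X i) (C.p (C.ft^[i] X))

/-- Iterated pull-back morphism `q(f,X,i) : f*(X,i) → X` for `f : Y → ft^i X`. -/
def CSys.qIter {Ob : Type u} {Mor : Type v} (C : CSys Ob Mor) (f : Mor) : Ob → ℕ → Mor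
  | _, 0 => f
  | X, i + 1 => C.q X (CSys.qIter C f (C.ft X) i)

/-- Iterated pull-back object `f*(X,i)` for `f : Y → ft^i X`. -/
def CSys.starIter {Ob : Type u} {Mor : Type v} (C : CSys Ob Mor) (f : Mor) : Ob → ℕ → Ob
  | _, 0 => C.dom f
  | X, i + 1 => C.star X (CSys.qIter C f (C.ft X) i)

/-- Pull-back `f*(r,i) : f*(ft X, i-1) → f*(X,i)` of a section `r : ft X → X` along
`q(f, ft X, i-1)` (for `i ≥ 1`); it equals `s` applied to `q(f,ft X,i-1) ∘ r`. -/
def CSys.sectStar {Ob : Type u} {Mor : Type v} (C : CSys Ob Mor)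
    (f : Mor) (X : Ob) (r : Mor) (i : ℕ) : Mor :=
  C.sOp (C.comp (C.qIter f (C.ft X) (i - 1)) r)

/-- The diagonal `δ(X) = s_{Id_X} : X → p_X^*(X)`. -/
def CSys.delta {Ob : Type u} {Mor : Type v} (C : CSys Ob Mor) (X : Ob) : Mor :=
  C.sOp (C.id X)

/-- A C-subsystem: a sub-pre-category closed under the operations defining the
C-system structure. -/
structure Subsystem {Ob : Type u} {Mor : Type v} (C : CSys Ob Mor) where
  obs : Set Ob
  mors : Set Mor
  dom_mem : ∀ f ∈ mors, C.dom f ∈ obs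
  cod_mem : ∀ f ∈ mors, C.cod f ∈ obs
  id_mem : ∀ X ∈ obs, C.id X ∈ mors
  comp_mem : ∀ f ∈ mors, ∀ g ∈ mors, C.cod f = C.dom g → C.comp f g ∈ mors
  pt_mem : C.pt ∈ obs
  ft_mem : ∀ X ∈ obs, C.ft X ∈ obs
  p_mem : ∀ X ∈ obs, C.p X ∈ mors
  star_mem : ∀ X ∈ obs, ∀ f ∈ mors, 0 < C.l X → C.cod f = C.ft X → C.star X f ∈ obs
  q_mem : ∀ X ∈ obs, ∀ f ∈ mors, 0 < C.l X → C.cod f = C.ft X → C.q X f ∈ mors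
  s_mem : ∀ f ∈ mors, 0 < C.l (C.cod f) → C.sOp f ∈ mors

/-- The closure conditions (1)-(6) of Proposition 2009.10.15.prop2 on a pair of subsets
`B ⊆ Ob(CC)`, `B̃ ⊆ Õb(CC)`. -/
def CSys.Closed {Ob : Type u} {Mor : Type v} (C : CSys Ob Mor)
    (B : Set Ob) (Bt : Set Mor) : Prop :=
  C.pt ∈ B ∧
  (∀ X ∈ B, C.ft X ∈ B) ∧
  (∀ s ∈ Bt, C.cod s ∈ B) ∧
  (∀ Y ∈ B, ∀ r ∈ Bt, 0 < C.l Y → ∀ i : ℕ, 1 ≤ i → i ≤ C.l (C.cod r) →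
    C.ft Y = C.ft^[i] (C.cod r) → C.sectStar (C.p Y) (C.cod r) r i ∈ Bt) ∧
  (∀ s ∈ Bt, ∀ r ∈ Bt, ∀ i : ℕ, 1 ≤ i →
    C.cod s = C.ft^[i] (C.cod r) → C.sectStar s (C.cod r) r i ∈ Bt) ∧
  (∀ X ∈ B, 0 < C.l X → C.delta X ∈ Bt)

/-- The inductively defined set of morphisms `Mor(CC')` determined by a pair `(B,B̃)`:
`f : Y → pt` belongs iff `Y ∈ B`; `f : Y → X` with `l X > 0` belongs iff `X ∈ B`,
`ft(f)` belongs and `s_f ∈ B̃`. -/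
inductive MorIn {Ob : Type u} {Mor : Type v} (C : CSys Ob Mor)
    (B : Set Ob) (Bt : Set Mor) : Mor → Prop
  | base (f : Mor) : C.cod f = C.pt → C.dom f ∈ B → MorIn C B Bt f
  | step (f : Mor) : 0 < C.l (C.cod f) → C.cod f ∈ B →
      MorIn C B Bt (C.ftMor f) → C.sOp f ∈ Bt → MorIn C B Bt f

/-- A regular congruence relation on a C-system (Definition 2014.07.04.def1). -/
structure RegCong {Ob : Type u} {Mor : Type v} (C : CSys Ob Mor) where
  rOb : Ob → Ob → Prop
  rMor : Mor → Mor → Prop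
  eqv_ob : Equivalence rOb
  eqv_mor : Equivalence rMor
  dom_compat : ∀ f g, rMor f g → rOb (C.dom f) (C.dom g)
  cod_compat : ∀ f g, rMor f g → rOb (C.cod f) (C.cod g)
  id_compat : ∀ X Y, rOb X Y → rMor (C.id X) (C.id Y)
  ft_compat : ∀ X Y, rOb X Y → rOb (C.ft X) (C.ft Y)
  p_compat : ∀ X Y, rOb X Y → rMor (C.p X) (C.p Y)
  comp_compat : ∀ f f' g g', C.cod f = C.dom g → C.cod f' = C.dom g' →
    rMor f f' → rMor g g' → rMor (C.comp f g) (C.comp f' g')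
  star_compat : ∀ X X' f f', 0 < C.l X → 0 < C.l X' →
    C.cod f = C.ft X → C.cod f' = C.ft X' →
    rOb X X' → rMor f f' → rOb (C.star X f) (C.star X' f')
  q_compat : ∀ X X' f f', 0 < C.l X → 0 < C.l X' →
    C.cod f = C.ft X → C.cod f' = C.ft X' →
    rOb X X' → rMor f f' → rMor (C.q X f) (C.q X' f')
  s_compat : ∀ f f', 0 < C.l (C.cod f) → 0 < C.l (C.cod f') →
    rMor f f' → rMor (C.sOp f) (C.sOp f')
  l_compat : ∀ X Y, rOb X Y → C.l X = C.l Y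
  ob_lift : ∀ X F, 0 < C.l X → rOb (C.ft X) F → ∃ XF, rOb X XF ∧ C.ft XF = F
  mor_lift : ∀ f X' Y', rOb X' (C.dom f) → rOb Y' (C.cod f) →
    ∃ f', C.dom f' = X' ∧ C.cod f' = Y' ∧ rMor f' f

/-- A homomorphism of C-systems, given by a pair of maps on objects and morphisms. -/
structure IsHom {Ob₁ : Type u} {Mor₁ : Type v} {Ob₂ : Type u} {Mor₂ : Type v}
    (C : CSys Ob₁ Mor₁) (D : CSys Ob₂ Mor₂) (F : Ob₁ → Ob₂) (G : Mor₁ → Mor₂) : Prop where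
  dom_map : ∀ f, D.dom (G f) = F (C.dom f)
  cod_map : ∀ f, D.cod (G f) = F (C.cod f)
  id_map : ∀ X, G (C.id X) = D.id (F X)
  comp_map : ∀ f g, C.cod f = C.dom g → G (C.comp f g) = D.comp (G f) (G g)
  l_map : ∀ X, D.l (F X) = C.l X
  pt_map : F C.pt = D.pt
  ft_map : ∀ X, F (C.ft X) = D.ft (F X)
  p_map : ∀ X, G (C.p X) = D.p (F X)
  star_map : ∀ X f, 0 < C.l X → C.cod f = C.ft X → F (C.star X f) = D.star (F X) (G f)
  q_map : ∀ X f, 0 < C.l X → C.cod f = C.ft X → G (C.q X f) = D.q (F X) (G f)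
  s_map : ∀ f, 0 < C.l (C.cod f) → G (C.sOp f) = D.sOp (G f)

/-- A pair of equivalence relations `(∼, ≃)` on `(Ob(CC), Õb(CC))` satisfying the
conditions (1)-(4) of Proposition 2014.07.08.prop1.  The relation `≃` is encoded as a
relation on morphisms supported on `Õb(CC)`. -/
structure TPair {Ob : Type u} {Mor : Type v} (C : CSys Ob Mor) where
  rOb : Ob → Ob → Prop
  rT : Mor → Mor → Prop
  eqv_ob : Equivalence rOb
  rT_supp : ∀ s r, rT s r → s ∈ C.tOb ∧ r ∈ C.tOb
  rT_refl : ∀ s ∈ C.tOb, rT s s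
  rT_symm : ∀ s r, rT s r → rT r s
  rT_trans : ∀ s r t, rT s r → rT r t → rT s t
  ft_compat : ∀ X Y, rOb X Y → rOb (C.ft X) (C.ft Y)
  bd_compat : ∀ s r, rT s r → rOb (C.cod s) (C.cod r)
  T_compat : ∀ Y Y' X X' (i : ℕ), 1 ≤ i → i ≤ C.l X → i ≤ C.l X' →
    0 < C.l Y → 0 < C.l Y' → C.ft Y = C.ft^[i] X → C.ft Y' = C.ft^[i] X' →
    rOb Y Y' → rOb X X' →
    rOb (C.starIter (C.p Y) X i) (C.starIter (C.p Y') X' i)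
  Tt_compat : ∀ Y Y' r r' (i : ℕ), 1 ≤ i → i ≤ C.l (C.cod r) → i ≤ C.l (C.cod r') →
    0 < C.l Y → 0 < C.l Y' → C.ft Y = C.ft^[i] (C.cod r) → C.ft Y' = C.ft^[i] (C.cod r') →
    rOb Y Y' → rT r r' →
    rT (C.sectStar (C.p Y) (C.cod r) r i) (C.sectStar (C.p Y') (C.cod r') r' i)
  S_compat : ∀ s s' X X' (i : ℕ), 1 ≤ i → s ∈ C.tOb → s' ∈ C.tOb →
    C.cod s = C.ft^[i] X → C.cod s' = C.ft^[i] X' → rT s s' → rOb X X' →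
    rOb (C.starIter s X i) (C.starIter s' X' i)
  St_compat : ∀ s s' r r' (i : ℕ), 1 ≤ i →
    C.cod s = C.ft^[i] (C.cod r) → C.cod s' = C.ft^[i] (C.cod r') →
    rT s s' → rT r r' →
    rT (C.sectStar s (C.cod r) r i) (C.sectStar s' (C.cod r') r' i)
  delta_compat : ∀ X X', 0 < C.l X → 0 < C.l X' → rOb X X' →
    rT (C.delta X) (C.delta X')
  l_compat : ∀ X Y, rOb X Y → C.l X = C.l Y
  ob_lift : ∀ X F, 0 < C.l X → rOb (C.ft X) F → ∃ XF, rOb X XF ∧ C.ft XF = F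
  sec_lift : ∀ s X', s ∈ C.tOb → rOb X' (C.cod s) →
    ∃ s', s' ∈ C.tOb ∧ C.cod s' = X' ∧ rT s' s

/-- The relation `∼_Mor` on morphisms with codomain of length `m`, defined by induction
on `m` from a pair `(∼, ≃)`:  for `m = 0`, `(X₁ → pt) ∼ (X₂ → pt)` iff `X₁ ∼ X₂`;
for `m+1`, `f₁ ∼ f₂` iff `ft(f₁) ∼ ft(f₂)` and `s_{f₁} ≃ s_{f₂}`. -/
def CSys.relMorN {Ob : Type u} {Mor : Type v} (C : CSys Ob Mor) (P : TPair C) :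
    ℕ → Mor → Mor → Prop
  | 0, f₁, f₂ => C.cod f₁ = C.pt ∧ C.cod f₂ = C.pt ∧ P.rOb (C.dom f₁) (C.dom f₂)
  | m + 1, f₁, f₂ => C.l (C.cod f₁) = m + 1 ∧ C.l (C.cod f₂) = m + 1 ∧
      CSys.relMorN C P m (C.ftMor f₁) (C.ftMor f₂) ∧ P.rT (C.sOp f₁) (C.sOp f₂)

def CSys.relMor {Ob : Type u} {Mor : Type v} (C : CSys Ob Mor) (P : TPair C)
    (f₁ f₂ : Mor) : Prop :=
  CSys.relMorN C P (C.l (C.cod f₁)) f₁ f₂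

/-- `s_{g∘f} = g*(s_f,1)`, i.e. `s_{g∘f}` satisfies the two equations
characterizing the pull-back of the section `s_f : Y → (ft f)*X` along `g : Z → Y`:
`s_{g∘f} ∘ p_{g*((ft f)*X)} = Id_Z` and `s_{g∘f} ∘ q(g,(ft f)*X) = g ∘ s_f`. -/
theorem stmt13 {Ob : Type u} {Mor : Type v} (C : CSys Ob Mor)
    (g f : Mor) (hgf : C.cod g = C.dom f) (hl : 0 < C.l (C.cod f)) :
    C.comp (C.sOp (C.comp g f))
        (C.p (C.star (C.star (C.cod f) (C.ftMor f)) g)) = C.id (C.dom g) ∧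
    C.comp (C.sOp (C.comp g f))
        (C.q (C.star (C.cod f) (C.ftMor f)) g) = C.comp g (C.sOp f) := by
  obtain ⟨hdom, hcod, hp, hq, h5⟩ := C.sOp_spec
  have hftm : ∀ u : Mor, C.ftMor u = C.toC0.ftMor u := fun _ => rfl
  have hcodh : C.cod (C.ftMor f) = C.ft (C.cod f) := by
    rw [hftm, C0.ftMor, C.cod_comp f (C.p (C.cod f)) (by rw [C.p_dom]), C.p_cod]
  have hsf_dom : C.dom (C.sOp f) = C.dom f := hdom f hl
  have hsf_cod : C.cod (C.sOp f) = C.star (C.cod f) (C.ftMor f) := hcod f hl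
  have hgs : C.cod g = C.dom (C.sOp f) := by rw [hsf_dom]; exact hgf
  set t := C.comp g (C.sOp f) with ht
  have ht_dom : C.dom t = C.dom g := C.dom_comp g (C.sOp f) hgs
  have ht_cod : C.cod t = C.star (C.cod f) (C.ftMor f) := by
    rw [ht, C.cod_comp g (C.sOp f) hgs, hsf_cod]
  have hlt : 0 < C.l (C.cod t) := by
    rw [ht_cod]; exact C.l_star (C.cod f) (C.ftMor f) hl hcodh
  have hsp : C.cod (C.sOp f) = C.dom (C.p (C.star (C.cod f) (C.ftMor f))) := by
    rw [C.p_dom, hsf_cod]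
  have hft_t : C.ftMor t = g := by
    show C.comp t (C.p (C.cod t)) = g
    rw [ht_cod, ht, C.comp_assoc g (C.sOp f) (C.p (C.star (C.cod f) (C.ftMor f))) hgs hsp]
    rw [show C.comp (C.sOp f) (C.p (C.star (C.cod f) (C.ftMor f))) = C.id (C.dom f) from hp f hl]
    rw [← hgf, C.comp_id g]
  have hsq : C.cod (C.sOp f) = C.dom (C.q (C.cod f) (C.ftMor f)) := by
    rw [C.q_dom (C.cod f) (C.ftMor f) hl hcodh, hsf_cod]
  have htq : C.comp t (C.q (C.cod f) (C.ftMor f)) = C.comp g f := by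
    rw [ht, C.comp_assoc g (C.sOp f) (C.q (C.cod f) (C.ftMor f)) hgs hsq]
    rw [show C.comp (C.sOp f) (C.q (C.cod f) (C.ftMor f)) = f from hq f hl]
  have hkey : C.sOp (C.comp g f) = C.sOp t := by
    rw [h5 t (C.cod f) (C.ftMor f) hl hcodh hlt ht_cod, htq]
  have e1 := hp t hlt
  have e2 := hq t hlt
  rw [← hftm] at e1 e2
  rw [ht_cod, hft_t, ht_dom] at e1
  rw [ht_cod, hft_t] at e2
  exact ⟨by rw [hkey]; exact e1, by rw [hkey]; exact e2⟩
end

section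
/- Let CC be a C-system and R = (∼_Ob, ∼_Mor) a regular congruence relation on CC. Then there exists a unique C-system structure CC/R on the pair of quotient sets (Ob(CC)/∼_Ob, Mor(CC)/∼_Mor) such that the projection maps form a homomorphism of C-systems CC → CC/R. -/
universe u v

/-- A pre-category with genuinely partial composition: `comp f g h` is `f ∘ g`
(diagrammatic order) where `h` witnesses composability. -/
structure PreCatP (Ob : Type u) (Mor : Type v) where
  dom : Mor → Ob
  cod : Mor → Ob
  id : Ob → Mor
  comp : (f g : Mor) → cod f = dom g → Mor
  id_dom : ∀ X, dom (id X) = X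
  id_cod : ∀ X, cod (id X) = X
  dom_comp : ∀ f g h, dom (comp f g h) = dom f
  cod_comp : ∀ f g h, cod (comp f g h) = cod g
  id_comp : ∀ f, comp (id (dom f)) f (id_cod (dom f)) = f
  comp_id : ∀ f, comp f (id (cod f)) (id_dom (cod f)).symm = f
  comp_assoc : ∀ f g h (hfg : cod f = dom g) (hgh : cod g = dom h),
    comp (comp f g hfg) h ((cod_comp f g hfg).trans hgh) =
    comp f (comp g h hgh) (hfg.trans (dom_comp g h hgh).symm)

/-- A C0-system (Definition 2014.07.06.def3), with partial operations. -/
structure C0P (Ob : Type u) (Mor : Type v) extends PreCatP Ob Mor where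
  l : Ob → ℕ
  pt : Ob
  ft : Ob → Ob
  p : Ob → Mor
  p_dom : ∀ X, dom (p X) = X
  p_cod : ∀ X, cod (p X) = ft X
  star : (X : Ob) → (f : Mor) → 0 < l X → cod f = ft X → Ob
  q : (X : Ob) → (f : Mor) → 0 < l X → cod f = ft X → Mor
  l_pt : l pt = 0
  eq_pt : ∀ X, l X = 0 → X = pt
  l_ft : ∀ X, 0 < l X → l (ft X) = l X - 1
  ft_pt : ft pt = pt
  pt_final : ∀ Y, ∃! f, dom f = Y ∧ cod f = pt
  l_star : ∀ X f h1 h2, 0 < l (star X f h1 h2)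
  ft_star : ∀ X f h1 h2, ft (star X f h1 h2) = dom f
  q_dom : ∀ X f h1 h2, dom (q X f h1 h2) = star X f h1 h2
  q_cod : ∀ X f h1 h2, cod (q X f h1 h2) = X
  square_comm : ∀ X f h1 h2,
    comp (p (star X f h1 h2)) f ((p_cod (star X f h1 h2)).trans (ft_star X f h1 h2)) =
    comp (q X f h1 h2) (p X) ((q_cod X f h1 h2).trans (p_dom X).symm)
  star_id : ∀ X (h : 0 < l X), star X (id (ft X)) h (id_cod (ft X)) = X
  q_id : ∀ X (h : 0 < l X), q X (id (ft X)) h (id_cod (ft X)) = id X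
  star_comp : ∀ X f g (h1 : 0 < l X) (h2 : cod f = ft X) (h3 : cod g = dom f),
    star X (comp g f h3) h1 ((cod_comp g f h3).trans h2) =
    star (star X f h1 h2) g (l_star X f h1 h2) (h3.trans (ft_star X f h1 h2).symm)
  q_comp : ∀ X f g (h1 : 0 < l X) (h2 : cod f = ft X) (h3 : cod g = dom f),
    q X (comp g f h3) h1 ((cod_comp g f h3).trans h2) =
    comp (q (star X f h1 h2) g (l_star X f h1 h2) (h3.trans (ft_star X f h1 h2).symm))
      (q X f h1 h2)
      ((q_cod (star X f h1 h2) g (l_star X f h1 h2)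
        (h3.trans (ft_star X f h1 h2).symm)).trans (q_dom X f h1 h2).symm)

/-- A C-system (Definition 2014.07.06.def1): a C0-system together with the
operation `f ↦ s_f`, defined for `f : Y → X` with `l X > 0`. -/
structure CSysP (Ob : Type u) (Mor : Type v) extends C0P Ob Mor where
  sOp : (f : Mor) → 0 < l (cod f) → Mor
  sOp_dom : ∀ f h, dom (sOp f h) = dom f
  sOp_cod : ∀ f h, cod (sOp f h) =
    star (cod f) (comp f (p (cod f)) (p_dom (cod f)).symm) h
      ((cod_comp f (p (cod f)) (p_dom (cod f)).symm).trans (p_cod (cod f)))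
  sOp_sect : ∀ f h,
    comp (sOp f h)
      (p (star (cod f) (comp f (p (cod f)) (p_dom (cod f)).symm) h
        ((cod_comp f (p (cod f)) (p_dom (cod f)).symm).trans (p_cod (cod f)))))
      ((sOp_cod f h).trans (p_dom (star (cod f)
        (comp f (p (cod f)) (p_dom (cod f)).symm) h
        ((cod_comp f (p (cod f)) (p_dom (cod f)).symm).trans (p_cod (cod f))))).symm) =
    id (dom f)
  sOp_q : ∀ f h,
    comp (sOp f h)
      (q (cod f) (comp f (p (cod f)) (p_dom (cod f)).symm) h
        ((cod_comp f (p (cod f)) (p_dom (cod f)).symm).trans (p_cod (cod f))))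
      ((sOp_cod f h).trans (q_dom (cod f)
        (comp f (p (cod f)) (p_dom (cod f)).symm) h
        ((cod_comp f (p (cod f)) (p_dom (cod f)).symm).trans (p_cod (cod f)))).symm) = f
  sOp_stab : ∀ f U g (hU : 0 < l U) (hg : cod g = ft U)
      (hf : cod f = star U g hU hg) (hl : 0 < l (cod f)),
    sOp f hl = sOp (comp f (q U g hU hg) (hf.trans (q_dom U g hU hg).symm))
      (lt_of_lt_of_eq hU (congrArg l
        (((cod_comp f (q U g hU hg) (hf.trans (q_dom U g hU hg).symm)).trans
          (q_cod U g hU hg)))).symm)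

/-- A regular congruence relation (Definition 2014.07.04.def1). -/
structure RegCongP {Ob : Type u} {Mor : Type v} (C : CSysP Ob Mor) where
  rOb : Ob → Ob → Prop
  rMor : Mor → Mor → Prop
  eqv_ob : Equivalence rOb
  eqv_mor : Equivalence rMor
  dom_compat : ∀ f g, rMor f g → rOb (C.dom f) (C.dom g)
  cod_compat : ∀ f g, rMor f g → rOb (C.cod f) (C.cod g)
  id_compat : ∀ X Y, rOb X Y → rMor (C.id X) (C.id Y)
  ft_compat : ∀ X Y, rOb X Y → rOb (C.ft X) (C.ft Y)
  p_compat : ∀ X Y, rOb X Y → rMor (C.p X) (C.p Y)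
  comp_compat : ∀ f f' g g' (h : C.cod f = C.dom g) (h' : C.cod f' = C.dom g'),
    rMor f f' → rMor g g' → rMor (C.comp f g h) (C.comp f' g' h')
  star_compat : ∀ X X' f f' (h1 : 0 < C.l X) (h1' : 0 < C.l X')
    (h2 : C.cod f = C.ft X) (h2' : C.cod f' = C.ft X'),
    rOb X X' → rMor f f' → rOb (C.star X f h1 h2) (C.star X' f' h1' h2')
  q_compat : ∀ X X' f f' (h1 : 0 < C.l X) (h1' : 0 < C.l X')
    (h2 : C.cod f = C.ft X) (h2' : C.cod f' = C.ft X'),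
    rOb X X' → rMor f f' → rMor (C.q X f h1 h2) (C.q X' f' h1' h2')
  s_compat : ∀ f f' (h : 0 < C.l (C.cod f)) (h' : 0 < C.l (C.cod f')),
    rMor f f' → rMor (C.sOp f h) (C.sOp f' h')
  l_compat : ∀ X Y, rOb X Y → C.l X = C.l Y
  ob_lift : ∀ X F, 0 < C.l X → rOb (C.ft X) F → ∃ XF, rOb X XF ∧ C.ft XF = F
  mor_lift : ∀ f X' Y', rOb X' (C.dom f) → rOb Y' (C.cod f) →
    ∃ f', C.dom f' = X' ∧ C.cod f' = Y' ∧ rMor f' f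

/-- A homomorphism of C-systems: a pair of maps commuting with source, target,
identity, composition, the length functions and the operations. -/
structure IsHomP {Ob₁ : Type u} {Mor₁ : Type v} {Ob₂ : Type u} {Mor₂ : Type v}
    (C : CSysP Ob₁ Mor₁) (D : CSysP Ob₂ Mor₂)
    (F : Ob₁ → Ob₂) (G : Mor₁ → Mor₂) : Prop where
  dom_map : ∀ f, D.dom (G f) = F (C.dom f)
  cod_map : ∀ f, D.cod (G f) = F (C.cod f)
  id_map : ∀ X, G (C.id X) = D.id (F X)
  comp_map : ∀ f g (h : C.cod f = C.dom g),
    G (C.comp f g h) = D.comp (G f) (G g) (by rw [cod_map, dom_map, h])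
  l_map : ∀ X, D.l (F X) = C.l X
  pt_map : F C.pt = D.pt
  ft_map : ∀ X, F (C.ft X) = D.ft (F X)
  p_map : ∀ X, G (C.p X) = D.p (F X)
  star_map : ∀ X f (h1 : 0 < C.l X) (h2 : C.cod f = C.ft X),
    F (C.star X f h1 h2) = D.star (F X) (G f) (by rw [l_map]; exact h1)
      (by rw [cod_map, h2, ft_map])
  q_map : ∀ X f (h1 : 0 < C.l X) (h2 : C.cod f = C.ft X),
    G (C.q X f h1 h2) = D.q (F X) (G f) (by rw [l_map]; exact h1)
      (by rw [cod_map, h2, ft_map])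
  s_map : ∀ f (h : 0 < C.l (C.cod f)),
    G (C.sOp f h) = D.sOp (G f) (by rw [cod_map, l_map]; exact h)

noncomputable section
namespace QuotCS

variable {Ob : Type u} {Mor : Type v} {C : CSysP Ob Mor} (R : RegCongP C)

theorem relO {X Y : Ob} (h : Quot.mk R.rOb X = Quot.mk R.rOb Y) : R.rOb X Y := by
  have : Quot.lift (R.rOb X)
      (fun a b hab => propext ⟨fun hx => R.eqv_ob.trans hx hab,
        fun hx => R.eqv_ob.trans hx (R.eqv_ob.symm hab)⟩) (Quot.mk R.rOb Y) := by
    rw [← h]; exact R.eqv_ob.refl X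
  exact this

theorem relM {f g : Mor} (h : Quot.mk R.rMor f = Quot.mk R.rMor g) : R.rMor f g := by
  have : Quot.lift (R.rMor f)
      (fun a b hab => propext ⟨fun hx => R.eqv_mor.trans hx hab,
        fun hx => R.eqv_mor.trans hx (R.eqv_mor.symm hab)⟩) (Quot.mk R.rMor g) := by
    rw [← h]; exact R.eqv_mor.refl f
  exact this

def repO (x : Quot R.rOb) : Ob := (Quot.exists_rep x).choose

theorem repO_spec (x : Quot R.rOb) : Quot.mk R.rOb (repO R x) = x :=
  (Quot.exists_rep x).choose_spec

def repM (φ : Quot R.rMor) : Mor := (Quot.exists_rep φ).choose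

theorem repM_spec (φ : Quot R.rMor) : Quot.mk R.rMor (repM R φ) = φ :=
  (Quot.exists_rep φ).choose_spec

/-- Unary quotient operations via `Quot.lift` (so they compute on `Quot.mk`). -/
def Qdom : Quot R.rMor → Quot R.rOb :=
  Quot.lift (fun f => Quot.mk R.rOb (C.dom f)) (fun a b h => Quot.sound (R.dom_compat a b h))

def Qcod : Quot R.rMor → Quot R.rOb :=
  Quot.lift (fun f => Quot.mk R.rOb (C.cod f)) (fun a b h => Quot.sound (R.cod_compat a b h))

def Qid : Quot R.rOb → Quot R.rMor :=
  Quot.lift (fun X => Quot.mk R.rMor (C.id X)) (fun a b h => Quot.sound (R.id_compat a b h))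

def Ql : Quot R.rOb → ℕ := Quot.lift C.l (fun a b h => R.l_compat a b h)

def Qft : Quot R.rOb → Quot R.rOb :=
  Quot.lift (fun X => Quot.mk R.rOb (C.ft X)) (fun a b h => Quot.sound (R.ft_compat a b h))

def Qp : Quot R.rOb → Quot R.rMor :=
  Quot.lift (fun X => Quot.mk R.rMor (C.p X)) (fun a b h => Quot.sound (R.p_compat a b h))

theorem Qdom_rep (φ : Quot R.rMor) :
    Quot.mk R.rOb (C.dom (repM R φ)) = Qdom R φ := congrArg (Qdom R) (repM_spec R φ)

theorem Qcod_rep (φ : Quot R.rMor) :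
    Quot.mk R.rOb (C.cod (repM R φ)) = Qcod R φ := congrArg (Qcod R) (repM_spec R φ)

theorem Qft_rep (x : Quot R.rOb) :
    Quot.mk R.rOb (C.ft (repO R x)) = Qft R x := congrArg (Qft R) (repO_spec R x)

theorem Ql_rep (x : Quot R.rOb) : C.l (repO R x) = Ql R x := congrArg (Ql R) (repO_spec R x)

def liftM (f : Mor) (X Y : Ob) (hX : R.rOb X (C.dom f)) (hY : R.rOb Y (C.cod f)) : Mor :=
  (R.mor_lift f X Y hX hY).choose

theorem liftM_dom (f : Mor) (X Y : Ob) (hX : R.rOb X (C.dom f)) (hY : R.rOb Y (C.cod f)) :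
    C.dom (liftM R f X Y hX hY) = X := (R.mor_lift f X Y hX hY).choose_spec.1

theorem liftM_cod (f : Mor) (X Y : Ob) (hX : R.rOb X (C.dom f)) (hY : R.rOb Y (C.cod f)) :
    C.cod (liftM R f X Y hX hY) = Y := (R.mor_lift f X Y hX hY).choose_spec.2.1

theorem liftM_rel (f : Mor) (X Y : Ob) (hX : R.rOb X (C.dom f)) (hY : R.rOb Y (C.cod f)) :
    R.rMor (liftM R f X Y hX hY) f := (R.mor_lift f X Y hX hY).choose_spec.2.2

/-- Lift of the representative of `ψ`, composable after the representative of `φ`. -/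
def liftComp (φ ψ : Quot R.rMor) (h : Qcod R φ = Qdom R ψ) : Mor :=
  liftM R (repM R ψ) (C.cod (repM R φ)) (C.cod (repM R ψ))
    (relO R ((Qcod_rep R φ).trans (h.trans (Qdom_rep R ψ).symm)))
    (R.eqv_ob.refl _)

theorem liftComp_dom (φ ψ : Quot R.rMor) (h : Qcod R φ = Qdom R ψ) :
    C.dom (liftComp R φ ψ h) = C.cod (repM R φ) := liftM_dom ..

theorem liftComp_rel (φ ψ : Quot R.rMor) (h : Qcod R φ = Qdom R ψ) :
    R.rMor (liftComp R φ ψ h) (repM R ψ) := liftM_rel ..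

def Qcomp (φ ψ : Quot R.rMor) (h : Qcod R φ = Qdom R ψ) : Quot R.rMor :=
  Quot.mk R.rMor (C.comp (repM R φ) (liftComp R φ ψ h) (liftComp_dom R φ ψ h).symm)

theorem Qcomp_char {φ ψ : Quot R.rMor} (h : Qcod R φ = Qdom R ψ) {a b : Mor}
    (ha : Quot.mk R.rMor a = φ) (hb : Quot.mk R.rMor b = ψ) (hc : C.cod a = C.dom b) :
    Qcomp R φ ψ h = Quot.mk R.rMor (C.comp a b hc) := by
  subst ha; subst hb
  exact Quot.sound (R.comp_compat _ _ _ _ _ _ (relM R (repM_spec R _))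
    (R.eqv_mor.trans (liftComp_rel R _ _ h) (relM R (repM_spec R _))))

/-- Lift of the representative of `φ`, with codomain `C.ft (repO R x)`. -/
def liftFt (φ : Quot R.rMor) (x : Quot R.rOb) (h2 : Qcod R φ = Qft R x) : Mor :=
  liftM R (repM R φ) (C.dom (repM R φ)) (C.ft (repO R x))
    (R.eqv_ob.refl _)
    (R.eqv_ob.symm (relO R ((Qcod_rep R φ).trans (h2.trans (Qft_rep R x).symm))))

theorem liftFt_cod (φ : Quot R.rMor) (x : Quot R.rOb) (h2 : Qcod R φ = Qft R x) :
    C.cod (liftFt R φ x h2) = C.ft (repO R x) := liftM_cod ..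

theorem liftFt_rel (φ : Quot R.rMor) (x : Quot R.rOb) (h2 : Qcod R φ = Qft R x) :
    R.rMor (liftFt R φ x h2) (repM R φ) := liftM_rel ..

theorem repO_pos (x : Quot R.rOb) (h1 : 0 < Ql R x) : 0 < C.l (repO R x) :=
  lt_of_lt_of_eq h1 (Ql_rep R x).symm

def Qstar (x : Quot R.rOb) (φ : Quot R.rMor) (h1 : 0 < Ql R x) (h2 : Qcod R φ = Qft R x) :
    Quot R.rOb :=
  Quot.mk R.rOb (C.star (repO R x) (liftFt R φ x h2) (repO_pos R x h1) (liftFt_cod R φ x h2))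

def Qq (x : Quot R.rOb) (φ : Quot R.rMor) (h1 : 0 < Ql R x) (h2 : Qcod R φ = Qft R x) :
    Quot R.rMor :=
  Quot.mk R.rMor (C.q (repO R x) (liftFt R φ x h2) (repO_pos R x h1) (liftFt_cod R φ x h2))

theorem Qstar_char {x : Quot R.rOb} {φ : Quot R.rMor} (h1 : 0 < Ql R x)
    (h2 : Qcod R φ = Qft R x) {X : Ob} {f : Mor}
    (hX : Quot.mk R.rOb X = x) (hf : Quot.mk R.rMor f = φ)
    (hl : 0 < C.l X) (hc : C.cod f = C.ft X) :
    Qstar R x φ h1 h2 = Quot.mk R.rOb (C.star X f hl hc) := by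
  subst hX; subst hf
  exact Quot.sound (R.star_compat _ _ _ _ _ _ _ _ (relO R (repO_spec R _))
    (R.eqv_mor.trans (liftFt_rel R _ _ h2) (relM R (repM_spec R _))))

theorem Qq_char {x : Quot R.rOb} {φ : Quot R.rMor} (h1 : 0 < Ql R x)
    (h2 : Qcod R φ = Qft R x) {X : Ob} {f : Mor}
    (hX : Quot.mk R.rOb X = x) (hf : Quot.mk R.rMor f = φ)
    (hl : 0 < C.l X) (hc : C.cod f = C.ft X) :
    Qq R x φ h1 h2 = Quot.mk R.rMor (C.q X f hl hc) := by
  subst hX; subst hf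
  exact Quot.sound (R.q_compat _ _ _ _ _ _ _ _ (relO R (repO_spec R _))
    (R.eqv_mor.trans (liftFt_rel R _ _ h2) (relM R (repM_spec R _))))

def QsOp (φ : Quot R.rMor) (h : 0 < Ql R (Qcod R φ)) : Quot R.rMor :=
  Quot.mk R.rMor (C.sOp (repM R φ) (by rw [← Qcod_rep R φ] at h; exact h))

theorem QsOp_char {φ : Quot R.rMor} (h : 0 < Ql R (Qcod R φ)) {f : Mor}
    (hf : Quot.mk R.rMor f = φ) (hc : 0 < C.l (C.cod f)) :
    QsOp R φ h = Quot.mk R.rMor (C.sOp f hc) := by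
  subst hf
  exact Quot.sound (R.s_compat _ _ _ _ (relM R (repM_spec R _)))

theorem comp_rep (φ ψ : Quot R.rMor) (h : Qcod R φ = Qdom R ψ) :
    ∃ a b, ∃ hc : C.cod a = C.dom b,
      Quot.mk R.rMor a = φ ∧ Quot.mk R.rMor b = ψ :=
  ⟨repM R φ, liftComp R φ ψ h, (liftComp_dom R φ ψ h).symm, repM_spec R φ,
    (Quot.sound (liftComp_rel R φ ψ h)).trans (repM_spec R ψ)⟩

theorem star_rep (x : Quot R.rOb) (φ : Quot R.rMor) (h1 : 0 < Ql R x)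
    (h2 : Qcod R φ = Qft R x) :
    ∃ X f, ∃ (hl : 0 < C.l X) (hc : C.cod f = C.ft X),
      Quot.mk R.rOb X = x ∧ Quot.mk R.rMor f = φ :=
  ⟨repO R x, liftFt R φ x h2, repO_pos R x h1, liftFt_cod R φ x h2, repO_spec R x,
    (Quot.sound (liftFt_rel R φ x h2)).trans (repM_spec R φ)⟩

theorem mor_rep_dom (ψ : Quot R.rMor) {X : Ob} (hX : Quot.mk R.rOb X = Qdom R ψ) :
    ∃ g, C.dom g = X ∧ Quot.mk R.rMor g = ψ := by
  obtain ⟨g, hd, _, hr⟩ := R.mor_lift (repM R ψ) X (C.cod (repM R ψ))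
    (relO R (hX.trans (Qdom_rep R ψ).symm)) (R.eqv_ob.refl _)
  exact ⟨g, hd, (Quot.sound hr).trans (repM_spec R ψ)⟩

theorem mor_rep_cod (ψ : Quot R.rMor) {Y : Ob} (hY : Quot.mk R.rOb Y = Qcod R ψ) :
    ∃ g, C.cod g = Y ∧ Quot.mk R.rMor g = ψ := by
  obtain ⟨g, _, hc, hr⟩ := R.mor_lift (repM R ψ) (C.dom (repM R ψ)) Y
    (R.eqv_ob.refl _) (relO R (hY.trans (Qcod_rep R ψ).symm))
  exact ⟨g, hc, (Quot.sound hr).trans (repM_spec R ψ)⟩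

theorem pi_congr {α : Sort _} {P : α → Prop} {β : Sort _} (F : (a : α) → P a → β)
    {a a' : α} (e : a = a') (h : P a) (h' : P a') : F a h = F a' h' := by
  subst e; rfl

end QuotCS
end

noncomputable section
namespace QuotCS
variable {Ob : Type u} {Mor : Type v} {C : CSysP Ob Mor} (R : RegCongP C)

theorem Q_id_dom (x : Quot R.rOb) : Qdom R (Qid R x) = x := by
  induction x using Quot.ind with | _ X =>
  exact congrArg (Quot.mk R.rOb) (C.id_dom X)

theorem Q_id_cod (x : Quot R.rOb) : Qcod R (Qid R x) = x := by
  induction x using Quot.ind with | _ X =>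
  exact congrArg (Quot.mk R.rOb) (C.id_cod X)

theorem Q_dom_comp (φ ψ : Quot R.rMor) (h : Qcod R φ = Qdom R ψ) :
    Qdom R (Qcomp R φ ψ h) = Qdom R φ := by
  obtain ⟨a, b, hc, ha, hb⟩ := comp_rep R φ ψ h
  rw [Qcomp_char R h ha hb hc, ← ha]
  exact congrArg (Quot.mk R.rOb) (C.dom_comp a b hc)

theorem Q_cod_comp (φ ψ : Quot R.rMor) (h : Qcod R φ = Qdom R ψ) :
    Qcod R (Qcomp R φ ψ h) = Qcod R ψ := by
  obtain ⟨a, b, hc, ha, hb⟩ := comp_rep R φ ψ h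
  rw [Qcomp_char R h ha hb hc, ← hb]
  exact congrArg (Quot.mk R.rOb) (C.cod_comp a b hc)

theorem Q_id_comp (φ : Quot R.rMor) (h : Qcod R (Qid R (Qdom R φ)) = Qdom R φ) :
    Qcomp R (Qid R (Qdom R φ)) φ h = φ := by
  induction φ using Quot.ind with | _ f =>
  exact (Qcomp_char R h rfl rfl (C.id_cod (C.dom f))).trans
    (congrArg (Quot.mk R.rMor) (C.id_comp f))

theorem Q_comp_id (φ : Quot R.rMor) (h : Qcod R φ = Qdom R (Qid R (Qcod R φ))) :
    Qcomp R φ (Qid R (Qcod R φ)) h = φ := by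
  induction φ using Quot.ind with | _ f =>
  exact (Qcomp_char R h rfl rfl (C.id_dom (C.cod f)).symm).trans
    (congrArg (Quot.mk R.rMor) (C.comp_id f))

theorem Q_comp_assoc (φ ψ χ : Quot R.rMor) (hfg : Qcod R φ = Qdom R ψ)
    (hgh : Qcod R ψ = Qdom R χ)
    (H1 : Qcod R (Qcomp R φ ψ hfg) = Qdom R χ)
    (H2 : Qcod R φ = Qdom R (Qcomp R ψ χ hgh)) :
    Qcomp R (Qcomp R φ ψ hfg) χ H1 = Qcomp R φ (Qcomp R ψ χ hgh) H2 := by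
  obtain ⟨a, b, hab, ha, hb⟩ := comp_rep R φ ψ hfg
  have e1 : Qcomp R φ ψ hfg = Quot.mk R.rMor (C.comp a b hab) := Qcomp_char R hfg ha hb hab
  have h2' : Quot.mk R.rOb (C.cod b) = Qdom R χ := (congrArg (Qcod R) hb).trans hgh
  obtain ⟨k, hkd, hkχ⟩ := mor_rep_dom R χ h2'
  have hbk : C.cod b = C.dom k := hkd.symm
  calc Qcomp R (Qcomp R φ ψ hfg) χ H1
      = Quot.mk R.rMor (C.comp (C.comp a b hab) k ((C.cod_comp a b hab).trans hbk)) :=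
        Qcomp_char R H1 e1.symm hkχ _
    _ = Quot.mk R.rMor (C.comp a (C.comp b k hbk) (hab.trans (C.dom_comp b k hbk).symm)) :=
        congrArg (Quot.mk R.rMor) (C.comp_assoc a b k hab hbk)
    _ = Qcomp R φ (Qcomp R ψ χ hgh) H2 :=
        (Qcomp_char R H2 ha (Qcomp_char R hgh hb hkχ hbk).symm _).symm

theorem Q_p_dom (x : Quot R.rOb) : Qdom R (Qp R x) = x := by
  induction x using Quot.ind with | _ X =>
  exact congrArg (Quot.mk R.rOb) (C.p_dom X)

theorem Q_p_cod (x : Quot R.rOb) : Qcod R (Qp R x) = Qft R x := by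
  induction x using Quot.ind with | _ X =>
  exact congrArg (Quot.mk R.rOb) (C.p_cod X)

theorem Q_eq_pt (x : Quot R.rOb) (h : Ql R x = 0) : x = Quot.mk R.rOb C.pt := by
  induction x using Quot.ind with | _ X =>
  exact congrArg (Quot.mk R.rOb) (C.eq_pt X h)

theorem Q_l_ft (x : Quot R.rOb) (h : 0 < Ql R x) : Ql R (Qft R x) = Ql R x - 1 := by
  induction x using Quot.ind with | _ X =>
  exact C.l_ft X h

theorem Q_pt_final (y : Quot R.rOb) :
    ∃! φ, Qdom R φ = y ∧ Qcod R φ = Quot.mk R.rOb C.pt := by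
  induction y using Quot.ind with | _ Y =>
  obtain ⟨f, ⟨hfd, hfc⟩, _⟩ := C.pt_final Y
  refine ⟨Quot.mk R.rMor f, ⟨congrArg (Quot.mk R.rOb) hfd, congrArg (Quot.mk R.rOb) hfc⟩, ?_⟩
  rintro ψ ⟨h1, h2⟩
  induction ψ using Quot.ind with | _ g =>
  have hgc : C.cod g = C.pt := C.eq_pt _ (by rw [R.l_compat _ _ (relO R h2), C.l_pt])
  obtain ⟨f', hf'd, hf'c, hf'r⟩ := R.mor_lift f (C.dom g) C.pt
    (by rw [hfd]; exact relO R h1) (by rw [hfc]; exact R.eqv_ob.refl _)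
  obtain ⟨u, _, hu⟩ := C.pt_final (C.dom g)
  have : g = f' := (hu g ⟨rfl, hgc⟩).trans (hu f' ⟨hf'd, hf'c⟩).symm
  rw [this]
  exact Quot.sound hf'r

theorem Q_l_star (x : Quot R.rOb) (φ : Quot R.rMor) (h1 : 0 < Ql R x)
    (h2 : Qcod R φ = Qft R x) : 0 < Ql R (Qstar R x φ h1 h2) := by
  obtain ⟨X, f, hl, hc, hX, hf⟩ := star_rep R x φ h1 h2
  rw [Qstar_char R h1 h2 hX hf hl hc]
  exact C.l_star X f hl hc

theorem Q_ft_star (x : Quot R.rOb) (φ : Quot R.rMor) (h1 : 0 < Ql R x)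
    (h2 : Qcod R φ = Qft R x) : Qft R (Qstar R x φ h1 h2) = Qdom R φ := by
  obtain ⟨X, f, hl, hc, hX, hf⟩ := star_rep R x φ h1 h2
  rw [Qstar_char R h1 h2 hX hf hl hc, ← hf]
  exact congrArg (Quot.mk R.rOb) (C.ft_star X f hl hc)

theorem Q_q_dom (x : Quot R.rOb) (φ : Quot R.rMor) (h1 : 0 < Ql R x)
    (h2 : Qcod R φ = Qft R x) : Qdom R (Qq R x φ h1 h2) = Qstar R x φ h1 h2 := by
  obtain ⟨X, f, hl, hc, hX, hf⟩ := star_rep R x φ h1 h2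
  rw [Qq_char R h1 h2 hX hf hl hc, Qstar_char R h1 h2 hX hf hl hc]
  exact congrArg (Quot.mk R.rOb) (C.q_dom X f hl hc)

theorem Q_q_cod (x : Quot R.rOb) (φ : Quot R.rMor) (h1 : 0 < Ql R x)
    (h2 : Qcod R φ = Qft R x) : Qcod R (Qq R x φ h1 h2) = x := by
  obtain ⟨X, f, hl, hc, hX, hf⟩ := star_rep R x φ h1 h2
  rw [Qq_char R h1 h2 hX hf hl hc, ← hX]
  exact congrArg (Quot.mk R.rOb) (C.q_cod X f hl hc)

theorem Q_square_comm (x : Quot R.rOb) (φ : Quot R.rMor) (h1 : 0 < Ql R x)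
    (h2 : Qcod R φ = Qft R x)
    (H1 : Qcod R (Qp R (Qstar R x φ h1 h2)) = Qdom R φ)
    (H2 : Qcod R (Qq R x φ h1 h2) = Qdom R (Qp R x)) :
    Qcomp R (Qp R (Qstar R x φ h1 h2)) φ H1 = Qcomp R (Qq R x φ h1 h2) (Qp R x) H2 := by
  obtain ⟨X, f, hl, hc, hX, hf⟩ := star_rep R x φ h1 h2
  have hp1 : Quot.mk R.rMor (C.p (C.star X f hl hc)) = Qp R (Qstar R x φ h1 h2) :=
    congrArg (Qp R) (Qstar_char R h1 h2 hX hf hl hc).symm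
  have hq1 : Quot.mk R.rMor (C.q X f hl hc) = Qq R x φ h1 h2 :=
    (Qq_char R h1 h2 hX hf hl hc).symm
  have hp2 : Quot.mk R.rMor (C.p X) = Qp R x := congrArg (Qp R) hX
  exact (Qcomp_char R H1 hp1 hf ((C.p_cod _).trans (C.ft_star X f hl hc))).trans
    ((congrArg (Quot.mk R.rMor) (C.square_comm X f hl hc)).trans
      (Qcomp_char R H2 hq1 hp2 ((C.q_cod X f hl hc).trans (C.p_dom X).symm)).symm)

theorem Q_star_id (x : Quot R.rOb) (h : 0 < Ql R x)
    (H : Qcod R (Qid R (Qft R x)) = Qft R x) : Qstar R x (Qid R (Qft R x)) h H = x := by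
  induction x using Quot.ind with | _ X =>
  exact (Qstar_char R h H rfl rfl h (C.id_cod (C.ft X))).trans
    (congrArg (Quot.mk R.rOb) (C.star_id X h))

theorem Q_q_id (x : Quot R.rOb) (h : 0 < Ql R x)
    (H : Qcod R (Qid R (Qft R x)) = Qft R x) : Qq R x (Qid R (Qft R x)) h H = Qid R x := by
  induction x using Quot.ind with | _ X =>
  exact (Qq_char R h H rfl rfl h (C.id_cod (C.ft X))).trans
    (congrArg (Quot.mk R.rMor) (C.q_id X h))

theorem Q_star_comp (x : Quot R.rOb) (φ γ : Quot R.rMor) (h1 : 0 < Ql R x)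
    (h2 : Qcod R φ = Qft R x) (h3 : Qcod R γ = Qdom R φ)
    (H1 : Qcod R (Qcomp R γ φ h3) = Qft R x)
    (H2 : 0 < Ql R (Qstar R x φ h1 h2))
    (H3 : Qcod R γ = Qft R (Qstar R x φ h1 h2)) :
    Qstar R x (Qcomp R γ φ h3) h1 H1 = Qstar R (Qstar R x φ h1 h2) γ H2 H3 := by
  obtain ⟨X, f, hl, hc, hX, hf⟩ := star_rep R x φ h1 h2
  obtain ⟨g, hg, hgγ⟩ := mor_rep_cod R γ (Y := C.dom f)
    ((show Quot.mk R.rOb (C.dom f) = Qdom R φ from congrArg (Qdom R) hf).trans h3.symm)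
  have hcomp : Quot.mk R.rMor (C.comp g f hg) = Qcomp R γ φ h3 :=
    (Qcomp_char R h3 hgγ hf hg).symm
  have hstar : Quot.mk R.rOb (C.star X f hl hc) = Qstar R x φ h1 h2 :=
    (Qstar_char R h1 h2 hX hf hl hc).symm
  exact (Qstar_char R h1 H1 hX hcomp hl ((C.cod_comp g f hg).trans hc)).trans
    ((congrArg (Quot.mk R.rOb) (C.star_comp X f g hl hc hg)).trans
      (Qstar_char R H2 H3 hstar hgγ (C.l_star X f hl hc)
        (hg.trans (C.ft_star X f hl hc).symm)).symm)

theorem Q_q_comp (x : Quot R.rOb) (φ γ : Quot R.rMor) (h1 : 0 < Ql R x)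
    (h2 : Qcod R φ = Qft R x) (h3 : Qcod R γ = Qdom R φ)
    (H1 : Qcod R (Qcomp R γ φ h3) = Qft R x)
    (H2 : 0 < Ql R (Qstar R x φ h1 h2))
    (H3 : Qcod R γ = Qft R (Qstar R x φ h1 h2))
    (H4 : Qcod R (Qq R (Qstar R x φ h1 h2) γ H2 H3) = Qdom R (Qq R x φ h1 h2)) :
    Qq R x (Qcomp R γ φ h3) h1 H1
      = Qcomp R (Qq R (Qstar R x φ h1 h2) γ H2 H3) (Qq R x φ h1 h2) H4 := by
  obtain ⟨X, f, hl, hc, hX, hf⟩ := star_rep R x φ h1 h2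
  obtain ⟨g, hg, hgγ⟩ := mor_rep_cod R γ (Y := C.dom f)
    ((show Quot.mk R.rOb (C.dom f) = Qdom R φ from congrArg (Qdom R) hf).trans h3.symm)
  have hcomp : Quot.mk R.rMor (C.comp g f hg) = Qcomp R γ φ h3 :=
    (Qcomp_char R h3 hgγ hf hg).symm
  have hstar : Quot.mk R.rOb (C.star X f hl hc) = Qstar R x φ h1 h2 :=
    (Qstar_char R h1 h2 hX hf hl hc).symm
  have hq1 : Quot.mk R.rMor (C.q (C.star X f hl hc) g (C.l_star X f hl hc)
      (hg.trans (C.ft_star X f hl hc).symm)) = Qq R (Qstar R x φ h1 h2) γ H2 H3 :=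
    (Qq_char R H2 H3 hstar hgγ (C.l_star X f hl hc)
      (hg.trans (C.ft_star X f hl hc).symm)).symm
  have hq2 : Quot.mk R.rMor (C.q X f hl hc) = Qq R x φ h1 h2 :=
    (Qq_char R h1 h2 hX hf hl hc).symm
  exact (Qq_char R h1 H1 hX hcomp hl ((C.cod_comp g f hg).trans hc)).trans
    ((congrArg (Quot.mk R.rMor) (C.q_comp X f g hl hc hg)).trans
      (Qcomp_char R H4 hq1 hq2 ((C.q_cod _ _ _ _).trans (C.q_dom X f hl hc).symm)).symm)

theorem Q_sOp_dom (φ : Quot R.rMor) (h : 0 < Ql R (Qcod R φ)) :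
    Qdom R (QsOp R φ h) = Qdom R φ := by
  have hfφ : Quot.mk R.rMor (repM R φ) = φ := repM_spec R φ
  have hc : 0 < C.l (C.cod (repM R φ)) :=
    lt_of_lt_of_eq h (congrArg (Ql R) (Qcod_rep R φ)).symm
  exact (congrArg (Qdom R) (QsOp_char R h hfφ hc)).trans
    ((congrArg (Quot.mk R.rOb) (C.sOp_dom (repM R φ) hc)).trans (congrArg (Qdom R) hfφ))

theorem Q_sOp_cod (φ : Quot R.rMor) (h : 0 < Ql R (Qcod R φ))
    (H1 : Qcod R φ = Qdom R (Qp R (Qcod R φ)))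
    (H2 : Qcod R (Qcomp R φ (Qp R (Qcod R φ)) H1) = Qft R (Qcod R φ)) :
    Qcod R (QsOp R φ h) = Qstar R (Qcod R φ) (Qcomp R φ (Qp R (Qcod R φ)) H1) h H2 := by
  have hfφ : Quot.mk R.rMor (repM R φ) = φ := repM_spec R φ
  set f := repM R φ with hfdef
  have hc : 0 < C.l (C.cod f) := lt_of_lt_of_eq h (congrArg (Ql R) (Qcod_rep R φ)).symm
  have hXc : Quot.mk R.rOb (C.cod f) = Qcod R φ := Qcod_rep R φ
  have hp : Quot.mk R.rMor (C.p (C.cod f)) = Qp R (Qcod R φ) := congrArg (Qp R) hXc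
  have hcomp : Quot.mk R.rMor (C.comp f (C.p (C.cod f)) (C.p_dom (C.cod f)).symm)
      = Qcomp R φ (Qp R (Qcod R φ)) H1 :=
    (Qcomp_char R H1 hfφ hp (C.p_dom (C.cod f)).symm).symm
  have hcs : C.cod (C.comp f (C.p (C.cod f)) (C.p_dom (C.cod f)).symm) = C.ft (C.cod f) :=
    (C.cod_comp _ _ _).trans (C.p_cod (C.cod f))
  exact (congrArg (Qcod R) (QsOp_char R h hfφ hc)).trans
    ((congrArg (Quot.mk R.rOb) (C.sOp_cod f hc)).trans
      (Qstar_char R h H2 hXc hcomp hc hcs).symm)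

theorem Q_sOp_sect (φ : Quot R.rMor) (h : 0 < Ql R (Qcod R φ))
    (H1 : Qcod R φ = Qdom R (Qp R (Qcod R φ)))
    (H2 : Qcod R (Qcomp R φ (Qp R (Qcod R φ)) H1) = Qft R (Qcod R φ))
    (H3 : Qcod R (QsOp R φ h) =
      Qdom R (Qp R (Qstar R (Qcod R φ) (Qcomp R φ (Qp R (Qcod R φ)) H1) h H2))) :
    Qcomp R (QsOp R φ h)
      (Qp R (Qstar R (Qcod R φ) (Qcomp R φ (Qp R (Qcod R φ)) H1) h H2)) H3
    = Qid R (Qdom R φ) := by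
  have hfφ : Quot.mk R.rMor (repM R φ) = φ := repM_spec R φ
  set f := repM R φ with hfdef
  have hc : 0 < C.l (C.cod f) := lt_of_lt_of_eq h (congrArg (Ql R) (Qcod_rep R φ)).symm
  have hXc : Quot.mk R.rOb (C.cod f) = Qcod R φ := Qcod_rep R φ
  have hp : Quot.mk R.rMor (C.p (C.cod f)) = Qp R (Qcod R φ) := congrArg (Qp R) hXc
  have hcomp : Quot.mk R.rMor (C.comp f (C.p (C.cod f)) (C.p_dom (C.cod f)).symm)
      = Qcomp R φ (Qp R (Qcod R φ)) H1 :=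
    (Qcomp_char R H1 hfφ hp (C.p_dom (C.cod f)).symm).symm
  have hcs : C.cod (C.comp f (C.p (C.cod f)) (C.p_dom (C.cod f)).symm) = C.ft (C.cod f) :=
    (C.cod_comp _ _ _).trans (C.p_cod (C.cod f))
  have hS : Quot.mk R.rOb (C.star (C.cod f)
      (C.comp f (C.p (C.cod f)) (C.p_dom (C.cod f)).symm) hc hcs)
      = Qstar R (Qcod R φ) (Qcomp R φ (Qp R (Qcod R φ)) H1) h H2 :=
    (Qstar_char R h H2 hXc hcomp hc hcs).symm
  have hsop : Quot.mk R.rMor (C.sOp f hc) = QsOp R φ h := (QsOp_char R h hfφ hc).symm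
  have hpS : Quot.mk R.rMor (C.p (C.star (C.cod f)
      (C.comp f (C.p (C.cod f)) (C.p_dom (C.cod f)).symm) hc hcs)) =
      Qp R (Qstar R (Qcod R φ) (Qcomp R φ (Qp R (Qcod R φ)) H1) h H2) :=
    congrArg (Qp R) hS
  exact (Qcomp_char R H3 hsop hpS ((C.sOp_cod f hc).trans (C.p_dom _).symm)).trans
    ((congrArg (Quot.mk R.rMor) (C.sOp_sect f hc)).trans
      (congrArg (fun ψ => Qid R (Qdom R ψ)) hfφ))

theorem Q_sOp_q (φ : Quot R.rMor) (h : 0 < Ql R (Qcod R φ))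
    (H1 : Qcod R φ = Qdom R (Qp R (Qcod R φ)))
    (H2 : Qcod R (Qcomp R φ (Qp R (Qcod R φ)) H1) = Qft R (Qcod R φ))
    (H3 : Qcod R (QsOp R φ h) =
      Qdom R (Qq R (Qcod R φ) (Qcomp R φ (Qp R (Qcod R φ)) H1) h H2)) :
    Qcomp R (QsOp R φ h)
      (Qq R (Qcod R φ) (Qcomp R φ (Qp R (Qcod R φ)) H1) h H2) H3 = φ := by
  have hfφ : Quot.mk R.rMor (repM R φ) = φ := repM_spec R φ
  set f := repM R φ with hfdef
  have hc : 0 < C.l (C.cod f) := lt_of_lt_of_eq h (congrArg (Ql R) (Qcod_rep R φ)).symm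
  have hXc : Quot.mk R.rOb (C.cod f) = Qcod R φ := Qcod_rep R φ
  have hp : Quot.mk R.rMor (C.p (C.cod f)) = Qp R (Qcod R φ) := congrArg (Qp R) hXc
  have hcomp : Quot.mk R.rMor (C.comp f (C.p (C.cod f)) (C.p_dom (C.cod f)).symm)
      = Qcomp R φ (Qp R (Qcod R φ)) H1 :=
    (Qcomp_char R H1 hfφ hp (C.p_dom (C.cod f)).symm).symm
  have hcs : C.cod (C.comp f (C.p (C.cod f)) (C.p_dom (C.cod f)).symm) = C.ft (C.cod f) :=
    (C.cod_comp _ _ _).trans (C.p_cod (C.cod f))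
  have hsop : Quot.mk R.rMor (C.sOp f hc) = QsOp R φ h := (QsOp_char R h hfφ hc).symm
  have hqS : Quot.mk R.rMor (C.q (C.cod f)
      (C.comp f (C.p (C.cod f)) (C.p_dom (C.cod f)).symm) hc hcs) =
      Qq R (Qcod R φ) (Qcomp R φ (Qp R (Qcod R φ)) H1) h H2 :=
    (Qq_char R h H2 hXc hcomp hc hcs).symm
  exact (Qcomp_char R H3 hsop hqS ((C.sOp_cod f hc).trans (C.q_dom _ _ _ _).symm)).trans
    ((congrArg (Quot.mk R.rMor) (C.sOp_q f hc)).trans hfφ)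

theorem Q_sOp_stab (φ : Quot R.rMor) (u : Quot R.rOb) (γ : Quot R.rMor)
    (hU : 0 < Ql R u) (hg : Qcod R γ = Qft R u)
    (hf : Qcod R φ = Qstar R u γ hU hg) (hl : 0 < Ql R (Qcod R φ))
    (H1 : Qcod R φ = Qdom R (Qq R u γ hU hg))
    (H2 : 0 < Ql R (Qcod R (Qcomp R φ (Qq R u γ hU hg) H1))) :
    QsOp R φ hl = QsOp R (Qcomp R φ (Qq R u γ hU hg) H1) H2 := by
  obtain ⟨U, g, hlU, hgc, hUu, hgγ⟩ := star_rep R u γ hU hg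
  have hSt : Quot.mk R.rOb (C.star U g hlU hgc) = Qstar R u γ hU hg :=
    (Qstar_char R hU hg hUu hgγ hlU hgc).symm
  obtain ⟨f, hfc, hfφ⟩ := mor_rep_cod R φ (Y := C.star U g hlU hgc) (hSt.trans hf.symm)
  have hq1 : Quot.mk R.rMor (C.q U g hlU hgc) = Qq R u γ hU hg :=
    (Qq_char R hU hg hUu hgγ hlU hgc).symm
  have hcpos : 0 < C.l (C.cod f) := by rw [hfc]; exact C.l_star U g hlU hgc
  have hcq : C.cod f = C.dom (C.q U g hlU hgc) := hfc.trans (C.q_dom U g hlU hgc).symm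
  have hcomp : Quot.mk R.rMor (C.comp f (C.q U g hlU hgc) hcq)
      = Qcomp R φ (Qq R u γ hU hg) H1 :=
    (Qcomp_char R H1 hfφ hq1 hcq).symm
  have hpos2 : 0 < C.l (C.cod (C.comp f (C.q U g hlU hgc) hcq)) := by
    rw [C.cod_comp, C.q_cod]; exact hlU
  exact (QsOp_char R hl hfφ hcpos).trans
    ((congrArg (Quot.mk R.rMor) (C.sOp_stab f U g hlU hgc hfc hcpos)).trans
      (QsOp_char R H2 hcomp hpos2).symm)

def QC : CSysP (Quot R.rOb) (Quot R.rMor) where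
  dom := Qdom R
  cod := Qcod R
  id := Qid R
  comp := Qcomp R
  id_dom := Q_id_dom R
  id_cod := Q_id_cod R
  dom_comp := Q_dom_comp R
  cod_comp := Q_cod_comp R
  id_comp := fun f => Q_id_comp R f _
  comp_id := fun f => Q_comp_id R f _
  comp_assoc := fun f g h hfg hgh => Q_comp_assoc R f g h hfg hgh _ _
  l := Ql R
  pt := Quot.mk R.rOb C.pt
  ft := Qft R
  p := Qp R
  p_dom := Q_p_dom R
  p_cod := Q_p_cod R
  star := Qstar R
  q := Qq R
  l_pt := C.l_pt
  eq_pt := Q_eq_pt R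
  l_ft := Q_l_ft R
  ft_pt := congrArg (Quot.mk R.rOb) C.ft_pt
  pt_final := Q_pt_final R
  l_star := Q_l_star R
  ft_star := Q_ft_star R
  q_dom := Q_q_dom R
  q_cod := Q_q_cod R
  square_comm := fun x φ h1 h2 => Q_square_comm R x φ h1 h2 _ _
  star_id := fun x h => Q_star_id R x h _
  q_id := fun x h => Q_q_id R x h _
  star_comp := fun x φ γ h1 h2 h3 => Q_star_comp R x φ γ h1 h2 h3 _ _ _
  q_comp := fun x φ γ h1 h2 h3 => Q_q_comp R x φ γ h1 h2 h3 _ _ _ _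
  sOp := QsOp R
  sOp_dom := Q_sOp_dom R
  sOp_cod := fun φ h => Q_sOp_cod R φ h _ _
  sOp_sect := fun φ h => Q_sOp_sect R φ h _ _ _
  sOp_q := fun φ h => Q_sOp_q R φ h _ _ _
  sOp_stab := fun φ u γ hU hg hf hl => Q_sOp_stab R φ u γ hU hg hf hl _ _

end QuotCS
end

noncomputable section
namespace QuotCS
variable {Ob : Type u} {Mor : Type v} {C : CSysP Ob Mor} (R : RegCongP C)

theorem QC_hom : IsHomP C (QC R) (Quot.mk R.rOb) (Quot.mk R.rMor) where
  dom_map f := rfl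
  cod_map f := rfl
  id_map X := rfl
  comp_map f g h := (Qcomp_char R (φ := Quot.mk R.rMor f) (ψ := Quot.mk R.rMor g)
    (congrArg (Quot.mk R.rOb) h) rfl rfl h).symm
  l_map X := rfl
  pt_map := rfl
  ft_map X := rfl
  p_map X := rfl
  star_map X f h1 h2 := (Qstar_char R (x := Quot.mk R.rOb X) (φ := Quot.mk R.rMor f)
    h1 (congrArg (Quot.mk R.rOb) h2) rfl rfl h1 h2).symm
  q_map X f h1 h2 := (Qq_char R (x := Quot.mk R.rOb X) (φ := Quot.mk R.rMor f)
    h1 (congrArg (Quot.mk R.rOb) h2) rfl rfl h1 h2).symm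
  s_map f h := (QsOp_char R (φ := Quot.mk R.rMor f) h rfl h).symm

theorem hom_unique (D₁ D₂ : CSysP (Quot R.rOb) (Quot R.rMor))
    (h₁ : IsHomP C D₁ (Quot.mk R.rOb) (Quot.mk R.rMor))
    (h₂ : IsHomP C D₂ (Quot.mk R.rOb) (Quot.mk R.rMor)) : D₁ = D₂ := by
  obtain ⟨⟨⟨d1, c1, i1, co1, _, _, _, _, _, _, _⟩, l1, pt1, ft1, p1, _, _, st1, q1,
    _, _, _, _, _, _, _, _, _, _, _, _, _, _⟩, s1, _, _, _, _, _⟩ := D₁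
  obtain ⟨⟨⟨d2, c2, i2, co2, _, _, _, _, _, _, _⟩, l2, pt2, ft2, p2, _, _, st2, q2,
    _, _, _, _, _, _, _, _, _, _, _, _, _, _⟩, s2, _, _, _, _, _⟩ := D₂
  have ed : d1 = d2 := by
    funext φ
    induction φ using Quot.ind with | _ f => ?_
    exact (h₁.dom_map f).trans (h₂.dom_map f).symm
  have ec : c1 = c2 := by
    funext φ
    induction φ using Quot.ind with | _ f => ?_
    exact (h₁.cod_map f).trans (h₂.cod_map f).symm
  have ei : i1 = i2 := by
    funext x
    induction x using Quot.ind with | _ X => ?_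
    exact (h₁.id_map X).symm.trans (h₂.id_map X)
  have el : l1 = l2 := by
    funext x
    induction x using Quot.ind with | _ X => ?_
    exact (h₁.l_map X).trans (h₂.l_map X).symm
  have ept : pt1 = pt2 := (h₁.pt_map).symm.trans h₂.pt_map
  have eft : ft1 = ft2 := by
    funext x
    induction x using Quot.ind with | _ X => ?_
    exact (h₁.ft_map X).symm.trans (h₂.ft_map X)
  have epp : p1 = p2 := by
    funext x
    induction x using Quot.ind with | _ X => ?_
    exact (h₁.p_map X).symm.trans (h₂.p_map X)
  subst ed; subst ec; subst ei; subst el; subst ept; subst eft; subst epp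
  have eco : co1 = co2 := by
    funext φ ψ
    induction φ using Quot.ind with | _ f => ?_
    induction ψ using Quot.ind with | _ g => ?_
    funext h
    have hco : R.rOb (C.cod f) (C.dom g) :=
      relO R (((h₁.cod_map f).symm.trans h).trans (h₂.dom_map g))
    obtain ⟨g', hg'd, hg'c, hg'r⟩ := R.mor_lift g (C.cod f) (C.cod g) hco (R.eqv_ob.refl _)
    have e : Quot.mk R.rMor g' = Quot.mk R.rMor g := Quot.sound hg'r
    have h' : c1 (Quot.mk R.rMor f) = d1 (Quot.mk R.rMor g') := h.trans (congrArg d1 e.symm)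
    calc co1 (Quot.mk R.rMor f) (Quot.mk R.rMor g) h
        = co1 (Quot.mk R.rMor f) (Quot.mk R.rMor g') h' :=
          pi_congr (fun ψ hp => co1 (Quot.mk R.rMor f) ψ hp) e.symm h h'
      _ = Quot.mk R.rMor (C.comp f g' hg'd.symm) := (h₁.comp_map f g' hg'd.symm).symm
      _ = co2 (Quot.mk R.rMor f) (Quot.mk R.rMor g') h' := h₂.comp_map f g' hg'd.symm
      _ = co2 (Quot.mk R.rMor f) (Quot.mk R.rMor g) h :=
          (pi_congr (fun ψ hp => co2 (Quot.mk R.rMor f) ψ hp) e.symm h h').symm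
  subst eco
  have est : st1 = st2 := by
    funext x φ
    induction x using Quot.ind with | _ X => ?_
    induction φ using Quot.ind with | _ f => ?_
    funext hl hcq
    have hlX : 0 < C.l X := lt_of_lt_of_eq hl (h₁.l_map X)
    have hco : R.rOb (C.cod f) (C.ft X) :=
      relO R (((h₁.cod_map f).symm.trans hcq).trans (h₁.ft_map X).symm)
    obtain ⟨f', hf'd, hf'c, hf'r⟩ :=
      R.mor_lift f (C.dom f) (C.ft X) (R.eqv_ob.refl _) (R.eqv_ob.symm hco)
    have e : Quot.mk R.rMor f' = Quot.mk R.rMor f := Quot.sound hf'r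
    have hcq' : c1 (Quot.mk R.rMor f') = ft1 (Quot.mk R.rOb X) := (congrArg c1 e).trans hcq
    calc st1 (Quot.mk R.rOb X) (Quot.mk R.rMor f) hl hcq
        = st1 (Quot.mk R.rOb X) (Quot.mk R.rMor f') hl hcq' :=
          pi_congr (fun ψ hp => st1 (Quot.mk R.rOb X) ψ hl hp) e.symm hcq hcq'
      _ = Quot.mk R.rOb (C.star X f' hlX hf'c) := (h₁.star_map X f' hlX hf'c).symm
      _ = st2 (Quot.mk R.rOb X) (Quot.mk R.rMor f') hl hcq' := h₂.star_map X f' hlX hf'c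
      _ = st2 (Quot.mk R.rOb X) (Quot.mk R.rMor f) hl hcq :=
          (pi_congr (fun ψ hp => st2 (Quot.mk R.rOb X) ψ hl hp) e.symm hcq hcq').symm
  subst est
  have eqq : q1 = q2 := by
    funext x φ
    induction x using Quot.ind with | _ X => ?_
    induction φ using Quot.ind with | _ f => ?_
    funext hl hcq
    have hlX : 0 < C.l X := lt_of_lt_of_eq hl (h₁.l_map X)
    have hco : R.rOb (C.cod f) (C.ft X) :=
      relO R (((h₁.cod_map f).symm.trans hcq).trans (h₁.ft_map X).symm)
    obtain ⟨f', hf'd, hf'c, hf'r⟩ :=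
      R.mor_lift f (C.dom f) (C.ft X) (R.eqv_ob.refl _) (R.eqv_ob.symm hco)
    have e : Quot.mk R.rMor f' = Quot.mk R.rMor f := Quot.sound hf'r
    have hcq' : c1 (Quot.mk R.rMor f') = ft1 (Quot.mk R.rOb X) := (congrArg c1 e).trans hcq
    calc q1 (Quot.mk R.rOb X) (Quot.mk R.rMor f) hl hcq
        = q1 (Quot.mk R.rOb X) (Quot.mk R.rMor f') hl hcq' :=
          pi_congr (fun ψ hp => q1 (Quot.mk R.rOb X) ψ hl hp) e.symm hcq hcq'
      _ = Quot.mk R.rMor (C.q X f' hlX hf'c) := (h₁.q_map X f' hlX hf'c).symm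
      _ = q2 (Quot.mk R.rOb X) (Quot.mk R.rMor f') hl hcq' := h₂.q_map X f' hlX hf'c
      _ = q2 (Quot.mk R.rOb X) (Quot.mk R.rMor f) hl hcq :=
          (pi_congr (fun ψ hp => q2 (Quot.mk R.rOb X) ψ hl hp) e.symm hcq hcq').symm
  subst eqq
  have es : s1 = s2 := by
    funext φ
    induction φ using Quot.ind with | _ f => ?_
    funext hl
    have hc : 0 < C.l (C.cod f) := by
      have h0 := hl
      rw [h₁.cod_map f, h₁.l_map (C.cod f)] at h0
      exact h0
    exact (h₁.s_map f hc).symm.trans (h₂.s_map f hc)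
  subst es
  rfl

end QuotCS
end

/-- Lemma 2014.07.08.l1: for a regular congruence relation `R` on a
C-system `CC` there is a unique C-system `CC/R` on the pair of quotient sets
`(Ob(CC)/∼_Ob, Mor(CC)/∼_Mor)` such that the projection maps form a homomorphism of
C-systems. -/
theorem stmt14 {Ob : Type u} {Mor : Type v} (C : CSysP Ob Mor) (R : RegCongP C) :
    ∃! D : CSysP (Quot R.rOb) (Quot R.rMor),
      IsHomP C D (Quot.mk R.rOb) (Quot.mk R.rMor) := by
  exact ⟨QuotCS.QC R, QuotCS.QC_hom R,
    fun D' h' => QuotCS.hom_unique R D' (QuotCS.QC R) h' (QuotCS.QC_hom R)⟩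
end

section
/- Let CC be a C-system, R = (∼_Ob, ∼_Mor) a regular congruence relation on CC, and ∼_Õb the restriction of ∼_Mor to Õb(CC). Then Õb(CC/R) = Õb(CC)/∼_Õb: every section of a canonical projection in the quotient C-system CC/R is the image of a section in Õb(CC), and two sections have the same image iff they are ∼_Mor-equivalent. -/
universe u v

/-- In any C-system, `s_t = t` for a section `t`. -/
lemma CSys.sOp_tOb {Ob : Type u} {Mor : Type v} (C : CSys Ob Mor) (t : Mor)
    (ht : t ∈ C.tOb) : C.sOp t = t := by
  obtain ⟨h1, _, h3⟩ := ht
  obtain ⟨hd, hc, _, hq, _⟩ := C.sOp_spec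
  have hft : C.toC0.ftMor t = C.id (C.ft (C.cod t)) := h3
  have h5 := hq t h1
  rw [hft, C.q_id _ h1] at h5
  have hcc : C.cod (C.sOp t) = C.cod t := by
    rw [hc t h1, hft, C.star_id _ h1]
  rw [← hcc, C.comp_id] at h5
  exact h5

/-- Lemma 2014.07.06.l2: for a quotient C-system `CC/R` (a C-system on
the quotient sets for which the projections form a homomorphism),
`Õb(CC/R) = Õb(CC)/∼_Õb`: every section in the quotient is the image of a section of
`CC`, and two sections of `CC` have the same image iff they are `∼_Mor`-equivalent. -/
theorem stmt15 {Ob : Type u} {Mor : Type v} (C : CSys Ob Mor) (R : RegCong C)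
    (D : CSys (Quot R.rOb) (Quot R.rMor))
    (hD : IsHom C D (Quot.mk R.rOb) (Quot.mk R.rMor)) :
    (∀ t, t ∈ D.tOb → ∃ s ∈ C.tOb, Quot.mk R.rMor s = t) ∧
    (∀ s ∈ C.tOb, ∀ s' ∈ C.tOb,
      (Quot.mk R.rMor s = Quot.mk R.rMor s' ↔ R.rMor s s')) := by
  constructor
  · intro t ht
    obtain ⟨f, rfl⟩ := Quot.exists_rep t
    have h1 := ht.1
    have h2 := ht.2.1
    -- basic facts about f
    have hcod : D.cod (Quot.mk R.rMor f) = Quot.mk R.rOb (C.cod f) := hD.cod_map f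
    have hlf : 0 < C.l (C.cod f) := by
      rw [hcod] at h1; rwa [hD.l_map] at h1
    have hdomft : R.rOb (C.dom f) (C.ft (C.cod f)) := by
      rw [hcod, hD.dom_map, ← hD.ft_map] at h2
      exact R.eqv_ob.eqvGen_iff.mp (Quot.eq.mp h2)
    -- lift f to f' : ft X → X
    obtain ⟨f', hfd, hfc, hff⟩ := R.mor_lift f (C.ft (C.cod f)) (C.cod f)
      (R.eqv_ob.symm hdomft) (R.eqv_ob.refl _)
    have hlf' : 0 < C.l (C.cod f') := by rwa [hfc]
    -- s := sOp f' is a section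
    obtain ⟨hd, hc, hcomp, _, _⟩ := C.sOp_spec
    have hftc : C.cod (C.toC0.ftMor f') = C.ft (C.cod f') := by
      show C.cod (C.comp f' (C.p (C.cod f'))) = _
      rw [C.cod_comp _ _ (C.p_dom _).symm, C.p_cod]
    have hftd : C.dom (C.toC0.ftMor f') = C.dom f' := by
      show C.dom (C.comp f' (C.p (C.cod f'))) = _
      rw [C.dom_comp _ _ (C.p_dom _).symm]
    have hcodS : C.cod (C.sOp f') = C.star (C.cod f') (C.toC0.ftMor f') := hc f' hlf'
    have hS : C.sOp f' ∈ C.tOb := by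
      refine ⟨?_, ?_, ?_⟩
      · rw [hcodS]; exact C.l_star _ _ hlf' hftc
      · rw [hcodS, C.ft_star _ _ hlf' hftc, hftd, hd f' hlf']
      · have := hcomp f' hlf'
        rw [hcodS, C.ft_star _ _ hlf' hftc, hftd]
        exact this
    refine ⟨C.sOp f', hS, ?_⟩
    have hq : Quot.mk R.rMor f' = Quot.mk R.rMor f := Quot.sound hff
    calc Quot.mk R.rMor (C.sOp f') = D.sOp (Quot.mk R.rMor f') := hD.s_map f' hlf'
      _ = D.sOp (Quot.mk R.rMor f) := by rw [hq]
      _ = Quot.mk R.rMor f := D.sOp_tOb _ ht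
  · intro s _ s' _
    exact Quot.eq.trans R.eqv_mor.eqvGen_iff
end

section
/- Let CC be a C-system, R = (∼_Ob, ∼_Mor) a regular congruence relation on CC, X ∈ Ob(CC) with l(X) > 0, and t : ft(X) → X a morphism such that t ∘ p_X ∼_Mor Id_{ft(X)}. Then there exists a section s : ft(X) → X in Õb(CC) (namely s = s_t) with t ∼_Mor s. -/
universe u v

/-- key step of Lemma 2014.07.06.l2: if `t : ft X → X` satisfies
`t ∘ p_X ∼_Mor Id_{ft X}` then there is a section in `Õb(CC)`, namely `s_t`, which is
`∼_Mor`-equivalent to `t` (and whose codomain is `∼_Ob`-equivalent to `X`). -/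
theorem stmt16 {Ob : Type u} {Mor : Type v} (C : CSys Ob Mor) (R : RegCong C)
    (X : Ob) (hX : 0 < C.l X) (t : Mor) (ht1 : C.dom t = C.ft X) (ht2 : C.cod t = X)
    (h : R.rMor (C.comp t (C.p X)) (C.id (C.ft X))) :
    ∃ s : Mor, s = C.sOp t ∧ s ∈ C.tOb ∧ C.dom s = C.ft X ∧
      R.rOb (C.cod s) X ∧ R.rMor t s := by
  obtain ⟨hdom, hcod, hsec, hq, -⟩ := C.sOp_spec
  have hlt : 0 < C.l (C.cod t) := by rw [ht2]; exact hX
  set s := C.sOp t with hs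
  -- facts about ftMor t
  have hftm : C0.ftMor C.toC0 t = C.comp t (C.p X) := by
    unfold C0.ftMor; rw [ht2]
  have hftm_cod : C.cod (C0.ftMor C.toC0 t) = C.ft X := by
    rw [hftm]
    have := C.cod_comp t (C.p X) (by rw [ht2, C.p_dom])
    rw [this, C.p_cod]
  -- codomain of s
  have hscod : C.cod s = C.star X (C0.ftMor C.toC0 t) := by
    have := hcod t hlt
    rw [hs, this, ht2]
  have hls : 0 < C.l (C.cod s) := by
    rw [hscod]; exact C.l_star X _ hX hftm_cod
  have hsdom : C.dom s = C.ft X := by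
    have := hdom t hlt
    rw [hs, this, ht1]
  have hftcods : C.ft (C.cod s) = C.ft X := by
    rw [hscod, C.ft_star X _ hX hftm_cod, hftm]
    rw [C.dom_comp t (C.p X) (by rw [ht2, C.p_dom]), ht1]
  have hssec : C.comp s (C.p (C.cod s)) = C.id (C.ft X) := by
    have := hsec t hlt
    rw [hs, hscod]
    rw [ht2] at this
    rw [this, ht1]
  have hstob : s ∈ C.tOb := ⟨hls, by rw [hsdom, hftcods], by rw [hssec, hftcods]⟩
  -- rOb (cod s) X
  have hrftm : R.rMor (C0.ftMor C.toC0 t) (C.id (C.ft X)) := by rw [hftm]; exact h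
  have hidcod : C.cod (C.id (C.ft X)) = C.ft X := C.id_cod _
  have hrob : R.rOb (C.cod s) X := by
    have h1 : R.rOb (C.star X (C0.ftMor C.toC0 t)) (C.star X (C.id (C.ft X))) :=
      R.star_compat X X _ _ hX hX hftm_cod hidcod (R.eqv_ob.refl X) hrftm
    rw [C.star_id X hX] at h1
    rw [hscod]; exact h1
  refine ⟨s, hs, hstob, hsdom, hrob, ?_⟩
  -- rMor t s
  have hqdom : C.dom (C.q X (C0.ftMor C.toC0 t)) = C.cod s := by
    rw [hscod]; exact C.q_dom X _ hX hftm_cod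
  have hrq : R.rMor (C.q X (C0.ftMor C.toC0 t)) (C.id (C.cod s)) := by
    have h1 : R.rMor (C.q X (C0.ftMor C.toC0 t)) (C.q X (C.id (C.ft X))) :=
      R.q_compat X X _ _ hX hX hftm_cod hidcod (R.eqv_ob.refl X) hrftm
    rw [C.q_id X hX] at h1
    exact R.eqv_mor.trans h1 (R.id_compat X (C.cod s) (R.eqv_ob.symm hrob))
  have ht : C.comp s (C.q X (C0.ftMor C.toC0 t)) = t := by
    have := hq t hlt
    rw [ht2] at this
    exact this
  have hcomp : R.rMor (C.comp s (C.q X (C0.ftMor C.toC0 t)))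
      (C.comp s (C.id (C.cod s))) :=
    R.comp_compat s s _ _ hqdom.symm (by rw [C.id_dom]) (R.eqv_mor.refl s) hrq
  rw [ht, C.comp_id s] at hcomp
  exact hcomp
end

section
/- Let CC be a C-system and let (∼_Ob, ∼₁) and (∼_Ob, ∼₂) be two regular congruence relations on CC with the same equivalence relation on objects and such that the restrictions of ∼₁ and ∼₂ to Õb(CC) coincide. Then ∼₁ = ∼₂: for all morphisms f, f', f ∼₁ f' if and only if f ∼₂ f'. -/
universe u v

section Aux17

variable {Ob : Type u} {Mor : Type v} (C : CSys Ob Mor)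

lemma aux17_ftMor_eq (f : Mor) : C0.ftMor C.toC0 f = C.ftMor f := rfl

lemma aux17_cod_ftMor (f : Mor) : C.cod (C.ftMor f) = C.ft (C.cod f) := by
  unfold CSys.ftMor
  rw [C.cod_comp _ _ (C.p_dom (C.cod f)).symm, C.p_cod]

lemma aux17_dom_ftMor (f : Mor) : C.dom (C.ftMor f) = C.dom f := by
  unfold CSys.ftMor
  rw [C.dom_comp _ _ (C.p_dom (C.cod f)).symm]

lemma aux17_s_mem (f : Mor) (h1 : 0 < C.l (C.cod f)) : C.sOp f ∈ C.tOb := by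
  obtain ⟨hdom, hcodS, hpid, hq, _⟩ := C.sOp_spec
  simp only [aux17_ftMor_eq] at hdom hcodS hpid hq
  have hc : C.cod (C.sOp f) = C.star (C.cod f) (C.ftMor f) := hcodS f h1
  have hft : C.ft (C.cod (C.sOp f)) = C.dom f := by
    rw [hc, C.ft_star _ _ h1 (aux17_cod_ftMor C f), aux17_dom_ftMor]
  refine ⟨?_, ?_, ?_⟩
  · rw [hc]; exact C.l_star _ _ h1 (aux17_cod_ftMor C f)
  · rw [hft, hdom f h1]
  · rw [hft, hc]; exact hpid f h1

lemma aux17_recon (R : RegCong C) (f f' : Mor)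
    (h1 : 0 < C.l (C.cod f)) (h1' : 0 < C.l (C.cod f'))
    (hcod : R.rOb (C.cod f) (C.cod f'))
    (hft : R.rMor (C.ftMor f) (C.ftMor f'))
    (hs : R.rMor (C.sOp f) (C.sOp f')) : R.rMor f f' := by
  obtain ⟨hdom, hcodS, hpid, hq, _⟩ := C.sOp_spec
  simp only [aux17_ftMor_eq] at hdom hcodS hpid hq
  have hf : C.comp (C.sOp f) (C.q (C.cod f) (C.ftMor f)) = f := hq f h1
  have hf' : C.comp (C.sOp f') (C.q (C.cod f') (C.ftMor f')) = f' := hq f' h1'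
  rw [← hf, ← hf']
  refine R.comp_compat _ _ _ _ ?_ ?_ hs ?_
  · rw [hcodS f h1, C.q_dom _ _ h1 (aux17_cod_ftMor C f)]
  · rw [hcodS f' h1', C.q_dom _ _ h1' (aux17_cod_ftMor C f')]
  · exact R.q_compat _ _ _ _ h1 h1' (aux17_cod_ftMor C f) (aux17_cod_ftMor C f') hcod hft

lemma aux17_ft_compat_mor (R : RegCong C) (f f' : Mor) (h : R.rMor f f') :
    R.rMor (C.ftMor f) (C.ftMor f') :=
  R.comp_compat _ _ _ _ (C.p_dom _).symm (C.p_dom _).symm h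
    (R.p_compat _ _ (R.cod_compat _ _ h))

lemma aux17_pt (R : RegCong C) (f f' : Mor) (hf : C.cod f = C.pt) (hf' : C.cod f' = C.pt)
    (h : R.rOb (C.dom f) (C.dom f')) : R.rMor f f' := by
  obtain ⟨g, hg1, hg2, hg3⟩ :=
    R.mor_lift f (C.dom f') (C.cod f) (R.eqv_ob.symm h) (R.eqv_ob.refl _)
  have hgf : g = f' :=
    (C.pt_final (C.dom f')).unique ⟨hg1, by rw [hg2, hf]⟩ ⟨rfl, hf'⟩
  exact R.eqv_mor.symm (hgf ▸ hg3)

lemma aux17_base (A B : RegCong C) (hOb : A.rOb = B.rOb)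
    (f f' : Mor) (hl : C.l (C.cod f) = 0) (h : A.rMor f f') : B.rMor f f' := by
  have hcodA := A.cod_compat _ _ h
  have hl' : C.l (C.cod f') = 0 := by rw [← A.l_compat _ _ hcodA, hl]
  exact aux17_pt C B f f' (C.eq_pt _ hl) (C.eq_pt _ hl') (hOb ▸ A.dom_compat _ _ h)

lemma aux17_step (A B : RegCong C) (hOb : A.rOb = B.rOb)
    (hT : ∀ s ∈ C.tOb, ∀ s' ∈ C.tOb, A.rMor s s' → B.rMor s s') (m : ℕ)
    (ih : ∀ g g', C.l (C.cod g) = m → A.rMor g g' → B.rMor g g')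
    (f f' : Mor) (hl : C.l (C.cod f) = m + 1) (h : A.rMor f f') : B.rMor f f' := by
  have h1 : 0 < C.l (C.cod f) := by omega
  have hcodA : A.rOb (C.cod f) (C.cod f') := A.cod_compat _ _ h
  have hl' : C.l (C.cod f') = m + 1 := by rw [← A.l_compat _ _ hcodA, hl]
  have h1' : 0 < C.l (C.cod f') := by omega
  have hftA : A.rMor (C.ftMor f) (C.ftMor f') := aux17_ft_compat_mor C A f f' h
  have hlft : C.l (C.cod (C.ftMor f)) = m := by
    rw [aux17_cod_ftMor, C.l_ft _ h1]; omega
  have hftB := ih _ _ hlft hftA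
  have hsA : A.rMor (C.sOp f) (C.sOp f') := A.s_compat _ _ h1 h1' h
  have hsB := hT _ (aux17_s_mem C f h1) _ (aux17_s_mem C f' h1') hsA
  exact aux17_recon C B f f' h1 h1' (hOb ▸ hcodA) hftB hsB

end Aux17

/-- injectivity part of Proposition 2014.07.08.prop1: two regular
congruence relations with the same relation on objects and the same restriction to
`Õb(CC)` coincide on all morphisms. -/
theorem stmt17 {Ob : Type u} {Mor : Type v} (C : CSys Ob Mor)
    (R₁ R₂ : RegCong C) (hOb : R₁.rOb = R₂.rOb)
    (hT : ∀ s ∈ C.tOb, ∀ s' ∈ C.tOb, (R₁.rMor s s' ↔ R₂.rMor s s')) :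
    ∀ f f' : Mor, R₁.rMor f f' ↔ R₂.rMor f f' := by
  have key : ∀ n (A B : RegCong C), A.rOb = B.rOb →
      (∀ s ∈ C.tOb, ∀ s' ∈ C.tOb, A.rMor s s' → B.rMor s s') →
      ∀ f f', C.l (C.cod f) = n → A.rMor f f' → B.rMor f f' := by
    intro n
    induction n with
    | zero =>
      intro A B h1 _ f f' hl h
      exact aux17_base C A B h1 f f' hl h
    | succ m ih =>
      intro A B h1 h2 f f' hl h
      exact aux17_step C A B h1 h2 m (fun g g' hg => ih A B h1 h2 g g' hg) f f' hl h
  intro f f'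
  constructor
  · exact key _ R₁ R₂ hOb (fun s hs s' hs' => (hT s hs s' hs').mp) f f' rfl
  · exact key _ R₂ R₁ hOb.symm (fun s hs s' hs' => (hT s hs s' hs').mpr) f f' rfl
end

section
/- Let CC be a C-system, let (∼, ≃) be a pair of equivalence relations on Ob(CC) and Õb(CC) satisfying conditions (1)–(4) of the bijection for regular congruence relations, and let ∼_Mor be defined by induction on m = l(∂₁(f)) by: (X₁ → pt) ∼_Mor (X₂ → pt) iff X₁ ∼ X₂; and for f₁ : X₁ → Y₁, f₂ : X₂ → Y₂ with l(Y₁) = l(Y₂) = m+1, f₁ ∼_Mor f₂ iff ft(f₁) ∼_Mor ft(f₂) and s_{f₁} ≃ s_{f₂}. Then for X₁ ∼ X₂ with n = l(X₁) = l(X₂) and any 0 ≤ i ≤ n one has p_{X₁,i} ∼_Mor p_{X₂,i}; in particular X₁ ∼ X₂ implies Id_{X₁} ∼_Mor Id_{X₂}. -/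
universe u v

section Aux

variable {Ob : Type u} {Mor : Type v} (C : CSys Ob Mor)

lemma pIter_dom_cod (X : Ob) (i : ℕ) :
    C.dom (C.pIter X i) = X ∧ C.cod (C.pIter X i) = C.ft^[i] X := by
  induction i with
  | zero => exact ⟨C.id_dom X, C.id_cod X⟩
  | succ i ih =>
    have hc : C.cod (C.pIter X i) = C.dom (C.p (C.ft^[i] X)) := by
      rw [ih.2, C.p_dom]
    constructor
    · rw [CSys.pIter, C.dom_comp _ _ hc, ih.1]
    · rw [CSys.pIter, C.cod_comp _ _ hc, C.p_cod, Function.iterate_succ_apply']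

lemma pIter_dom (X : Ob) (i : ℕ) : C.dom (C.pIter X i) = X := (pIter_dom_cod C X i).1

lemma pIter_cod (X : Ob) (i : ℕ) : C.cod (C.pIter X i) = C.ft^[i] X :=
  (pIter_dom_cod C X i).2

lemma l_ft_iter (X : Ob) (i : ℕ) (hi : i ≤ C.l X) : C.l (C.ft^[i] X) = C.l X - i := by
  induction i with
  | zero => rfl
  | succ i ih =>
    have h1 : i ≤ C.l X := le_of_lt (Nat.lt_of_succ_le hi)
    have h2 : 0 < C.l (C.ft^[i] X) := by
      rw [ih h1]; omega
    rw [Function.iterate_succ_apply', C.l_ft _ h2, ih h1]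
    omega

lemma pIter_succ' (X : Ob) (i : ℕ) :
    C.pIter X (i + 1) = C.comp (C.p X) (C.pIter (C.ft X) i) := by
  induction i generalizing X with
  | zero =>
    show C.comp (C.id X) (C.p X) = C.comp (C.p X) (C.id (C.ft X))
    have h1 : C.comp (C.id (C.dom (C.p X))) (C.p X) = C.p X := C.id_comp (C.p X)
    have h2 : C.comp (C.p X) (C.id (C.cod (C.p X))) = C.p X := C.comp_id (C.p X)
    rw [C.p_dom] at h1
    rw [C.p_cod] at h2
    rw [h1, h2]
  | succ i ih =>
    show C.comp (C.pIter X (i + 1)) (C.p (C.ft^[i+1] X)) = _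
    rw [ih X, Function.iterate_succ_apply]
    rw [C.comp_assoc _ _ _ (by rw [C.p_cod, pIter_dom]) (by rw [pIter_cod, C.p_dom])]
    rfl

lemma ftMor_pIter (X : Ob) (i : ℕ) :
    C.ftMor (C.pIter X i) = C.pIter X (i + 1) := by
  show C.comp (C.pIter X i) (C.p (C.cod (C.pIter X i))) = _
  rw [pIter_cod]; rfl

/-- The tower `E X i = T̃(X, T̃(ft X, …, T̃(ft^{i-1} X, δ(ft^i X))…))`. -/
def towerE : Ob → ℕ → Mor
  | X, 0 => C.delta X
  | X, i + 1 => C.sOp (C.comp (C.p X) (towerE (C.ft X) i))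

lemma ftMor_eq (f : Mor) : C.toC0.ftMor f = C.ftMor f := rfl

/-- The identity `s_{p_{X,i}} = T̃(X, T̃(ft X, …, T̃(ft^{i-1} X, δ(ft^i X))…))`. -/
lemma sOp_pIter (X : Ob) (i : ℕ) (hi : i < C.l X) :
    C.sOp (C.pIter X i) = towerE C X i := by
  induction i generalizing X with
  | zero => rfl
  | succ i ih =>
    have hft : i < C.l (C.ft X) := by
      have := C.l_ft X (by omega); omega
    obtain ⟨hs1, hs2, hs3, hs4, hs5⟩ := C.sOp_spec
    have hcodg' : C.cod (C.pIter (C.ft X) i) = C.ft^[i] (C.ft X) := pIter_cod C _ i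
    have hdomg' : C.dom (C.pIter (C.ft X) i) = C.ft X := pIter_dom C _ i
    have hlcod : 0 < C.l (C.cod (C.pIter (C.ft X) i)) := by
      rw [hcodg', l_ft_iter C _ i (le_of_lt hft)]; omega
    have hftm : C.toC0.ftMor (C.pIter (C.ft X) i) = C.pIter (C.ft X) (i + 1) := by
      rw [ftMor_eq]; exact ftMor_pIter C _ i
    have hlU : 0 < C.l (C.ft^[i] (C.ft X)) := hcodg' ▸ hlcod
    have hcodg : C.cod (C.pIter (C.ft X) (i + 1)) = C.ft (C.ft^[i] (C.ft X)) := by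
      rw [pIter_cod, Function.iterate_succ_apply']
    have hcodsg' : C.cod (C.sOp (C.pIter (C.ft X) i))
        = C.star (C.ft^[i] (C.ft X)) (C.pIter (C.ft X) (i + 1)) := by
      rw [hs2 _ hlcod, hftm, hcodg']
    have hdomsg' : C.dom (C.sOp (C.pIter (C.ft X) i)) = C.ft X := by
      rw [hs1 _ hlcod, hdomg']
    have hcomp1 : C.cod (C.p X) = C.dom (C.sOp (C.pIter (C.ft X) i)) := by
      rw [C.p_cod, hdomsg']
    have hcodf : C.cod (C.comp (C.p X) (C.sOp (C.pIter (C.ft X) i)))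
        = C.star (C.ft^[i] (C.ft X)) (C.pIter (C.ft X) (i + 1)) := by
      rw [C.cod_comp _ _ hcomp1, hcodsg']
    have hlcodf : 0 < C.l (C.cod (C.comp (C.p X) (C.sOp (C.pIter (C.ft X) i)))) := by
      rw [hcodf]; exact C.l_star _ _ hlU hcodg
    have h5 := hs5 (C.comp (C.p X) (C.sOp (C.pIter (C.ft X) i)))
      (C.ft^[i] (C.ft X)) (C.pIter (C.ft X) (i + 1)) hlU hcodg hlcodf hcodf
    have h4 : C.comp (C.sOp (C.pIter (C.ft X) i))
        (C.q (C.ft^[i] (C.ft X)) (C.pIter (C.ft X) (i + 1))) = C.pIter (C.ft X) i := by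
      have := hs4 (C.pIter (C.ft X) i) hlcod
      rwa [hcodg', hftm] at this
    have hassoc : C.comp (C.comp (C.p X) (C.sOp (C.pIter (C.ft X) i)))
          (C.q (C.ft^[i] (C.ft X)) (C.pIter (C.ft X) (i + 1)))
        = C.comp (C.p X) (C.comp (C.sOp (C.pIter (C.ft X) i))
          (C.q (C.ft^[i] (C.ft X)) (C.pIter (C.ft X) (i + 1)))) :=
      C.comp_assoc _ _ _ hcomp1 (by rw [hcodsg', C.q_dom _ _ hlU hcodg])
    have hfq : C.comp (C.comp (C.p X) (C.sOp (C.pIter (C.ft X) i)))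
          (C.q (C.ft^[i] (C.ft X)) (C.pIter (C.ft X) (i + 1)))
        = C.pIter X (i + 1) := by
      rw [hassoc, h4, ← pIter_succ']
    calc C.sOp (C.pIter X (i + 1))
        = C.sOp (C.comp (C.comp (C.p X) (C.sOp (C.pIter (C.ft X) i)))
            (C.q (C.ft^[i] (C.ft X)) (C.pIter (C.ft X) (i + 1)))) := by rw [hfq]
      _ = C.sOp (C.comp (C.p X) (C.sOp (C.pIter (C.ft X) i))) := h5.symm
      _ = C.sOp (C.comp (C.p X) (towerE C (C.ft X) i)) := by rw [ih _ hft]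
      _ = towerE C X (i + 1) := rfl

lemma cod_towerE (X : Ob) (i : ℕ) (hi : i < C.l X) :
    C.ft (C.cod (towerE C X i)) = X ∧ 0 < C.l (C.cod (towerE C X i)) := by
  obtain ⟨hs1, hs2, hs3, hs4, hs5⟩ := C.sOp_spec
  rw [← sOp_pIter C X i hi]
  have hlcod : 0 < C.l (C.cod (C.pIter X i)) := by
    rw [pIter_cod, l_ft_iter C X i (le_of_lt hi)]; omega
  have hftm : C.toC0.ftMor (C.pIter X i) = C.pIter X (i + 1) := by
    rw [ftMor_eq]; exact ftMor_pIter C X i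
  have hcod : C.cod (C.sOp (C.pIter X i)) = C.star (C.ft^[i] X) (C.pIter X (i + 1)) := by
    rw [hs2 _ hlcod, hftm, pIter_cod]
  have hlU : 0 < C.l (C.ft^[i] X) := by rw [l_ft_iter C X i (le_of_lt hi)]; omega
  have hcodg : C.cod (C.pIter X (i + 1)) = C.ft (C.ft^[i] X) := by
    rw [pIter_cod, Function.iterate_succ_apply']
  constructor
  · rw [hcod, C.ft_star _ _ hlU hcodg, pIter_dom]
  · rw [hcod]; exact C.l_star _ _ hlU hcodg

lemma rT_towerE (P : TPair C) (X₁ X₂ : Ob) (h : P.rOb X₁ X₂) (i : ℕ)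
    (hi : i < C.l X₁) : P.rT (towerE C X₁ i) (towerE C X₂ i) := by
  have hl : C.l X₁ = C.l X₂ := P.l_compat X₁ X₂ h
  induction i generalizing X₁ X₂ with
  | zero =>
    exact P.delta_compat X₁ X₂ hi (by omega) h
  | succ i ih =>
    have hft : i < C.l (C.ft X₁) := by have := C.l_ft X₁ (by omega); omega
    have hft₂ : i < C.l (C.ft X₂) := by have := C.l_ft X₂ (by omega); omega
    have hfr : P.rOb (C.ft X₁) (C.ft X₂) := P.ft_compat X₁ X₂ h
    have hrT : P.rT (towerE C (C.ft X₁) i) (towerE C (C.ft X₂) i) :=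
      ih _ _ hfr hft (P.l_compat _ _ hfr)
    obtain ⟨hfc₁, hlc₁⟩ := cod_towerE C (C.ft X₁) i hft
    obtain ⟨hfc₂, hlc₂⟩ := cod_towerE C (C.ft X₂) i hft₂
    have key := P.Tt_compat X₁ X₂ (towerE C (C.ft X₁) i) (towerE C (C.ft X₂) i) 1
      le_rfl (by omega) (by omega) (by omega) (by omega)
      (by rw [Function.iterate_one, hfc₁]) (by rw [Function.iterate_one, hfc₂])
      h hrT
    -- sectStar (p X) Z r 1 = sOp (comp (p X) r)
    exact key

end Aux

/-- for the relation `∼_Mor` defined by induction on the length of the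
codomain from a pair `(∼, ≃)` satisfying conditions (1)-(4), `X₁ ∼ X₂` implies
`p_{X₁,i} ∼_Mor p_{X₂,i}` for all `i ≤ l X₁ = l X₂`; in particular
`Id_{X₁} ∼_Mor Id_{X₂}`. -/
theorem stmt19 {Ob : Type u} {Mor : Type v} (C : CSys Ob Mor) (P : TPair C)
    (X₁ X₂ : Ob) (h : P.rOb X₁ X₂) (i : ℕ) (hi : i ≤ C.l X₁) :
    C.relMor P (C.pIter X₁ i) (C.pIter X₂ i) ∧
    C.relMor P (C.id X₁) (C.id X₂) := by
  have hl : C.l X₁ = C.l X₂ := P.l_compat X₁ X₂ h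
  set n := C.l X₁ with hn
  have key : ∀ k j, j ≤ n → n - j = k →
      C.relMorN P k (C.pIter X₁ j) (C.pIter X₂ j) := by
    intro k
    induction k with
    | zero =>
      intro j hj hjk
      have h1 : C.cod (C.pIter X₁ j) = C.pt := by
        rw [pIter_cod]
        exact C.eq_pt _ (by rw [l_ft_iter C X₁ j hj]; omega)
      have h2 : C.cod (C.pIter X₂ j) = C.pt := by
        rw [pIter_cod]
        exact C.eq_pt _ (by rw [l_ft_iter C X₂ j (by omega)]; omega)
      exact ⟨h1, h2, by rw [pIter_dom, pIter_dom]; exact h⟩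
    | succ k ih =>
      intro j hj hjk
      have hjn : j < n := by omega
      refine ⟨?_, ?_, ?_, ?_⟩
      · rw [pIter_cod, l_ft_iter C X₁ j hj]; omega
      · rw [pIter_cod, l_ft_iter C X₂ j (by omega)]; omega
      · rw [ftMor_pIter, ftMor_pIter]
        exact ih (j + 1) (by omega) (by omega)
      · rw [sOp_pIter C X₁ j hjn, sOp_pIter C X₂ j (by omega)]
        exact rT_towerE C P X₁ X₂ h j hjn
  constructor
  · have hc : C.l (C.cod (C.pIter X₁ i)) = n - i := by
      rw [pIter_cod, l_ft_iter C X₁ i hi]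
    unfold CSys.relMor
    rw [hc]
    exact key (n - i) i hi rfl
  · have hc : C.l (C.cod (C.id X₁)) = n := by rw [C.id_cod]
    unfold CSys.relMor
    rw [hc]
    exact key n 0 (by omega) (by omega)
end
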